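/- arXiv:2205.00326 — 9 statements merged into one kernel-verified Lean document; each statement's English description precedes it below -/
import Mathlib

section
/- For every i ∈ {κ+1, …, n−2}: i ∈ H if and only if ρ_{i,k(i+1)} < 1. -/
open Finset

/-- `rhoProd ρ k j = ∏_{i=k+1}^{j} ρ i`. -/
noncomputable def rhoProd (ρ : ℕ → ℝ) (k j : ℕ) : ℝ := ∏ i ∈ Finset.Icc (k + 1) j, ρ i

/-- `k` is a binding index: `k ∈ {κ+1, …, n-1}` and `ρ_{k,j} < 1` for all `j ∈ {k+1, …, n-1}`. -/
def Binding (ρ : ℕ → ℝ) (n κ k : ℕ) : Prop :=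
  κ + 1 ≤ k ∧ k ≤ n - 1 ∧ ∀ j, k + 1 ≤ j → j ≤ n - 1 → rhoProd ρ k j < 1

/-- `kmin ρ n κ i = min {k ∈ H : k ≥ i}`, the smallest binding index `≥ i`. -/
noncomputable def kmin (ρ : ℕ → ℝ) (n κ i : ℕ) : ℕ :=
  sInf {k | Binding ρ n κ k ∧ i ≤ k}

/-- `bar-α_i`: equals `α i` for `i ≤ κ` and `(ρ_{i, k(i)})⁻¹` for `i > κ`. -/
noncomputable def barAlpha (ρ α : ℕ → ℝ) (n κ i : ℕ) : ℝ :=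
  if i ≤ κ then α i else (rhoProd ρ i (kmin ρ n κ i))⁻¹

lemma rhoProd_mul (ρ : ℕ → ℝ) {k j j' : ℕ} (h1 : k ≤ j) (h2 : j ≤ j') :
    rhoProd ρ k j * rhoProd ρ j j' = rhoProd ρ k j' := by
  unfold rhoProd
  rw [Finset.Icc_add_one_left_eq_Ioc, Finset.Icc_add_one_left_eq_Ioc, Finset.Icc_add_one_left_eq_Ioc]
  exact Finset.prod_Ioc_consecutive ρ h1 h2

theorem stmt2 (n : ℕ) (hn : 2 ≤ n) (ρ α : ℕ → ℝ)
    (hρ : ∀ i, 1 ≤ i → i ≤ n → 0 < ρ i)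
    (hα0pos : 0 < α 0) (hα0le : α 0 ≤ 1)
    (hrec : ∀ k, 1 ≤ k → k ≤ n → α k = min (α (k - 1) * ρ k) 1)
    (κ : ℕ) (hκle : κ ≤ n - 1) (hκ1 : α κ = 1)
    (hκmax : ∀ k, k ≤ n - 1 → α k = 1 → k ≤ κ) :
    ∀ i, κ + 1 ≤ i → i ≤ n - 2 →
      (Binding ρ n κ i ↔ rhoProd ρ i (kmin ρ n κ (i + 1)) < 1) := by
  have hpos : ∀ k j : ℕ, j ≤ n → 0 < rhoProd ρ k j := by
    intro k j hj
    apply Finset.prod_pos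
    intro x hx
    rw [Finset.mem_Icc] at hx
    exact hρ x (by omega) (by omega)
  intro i hi1 hi2
  -- the set defining kmin
  set S : Set ℕ := {k | Binding ρ n κ k ∧ i + 1 ≤ k} with hS
  have hmem : (n - 1) ∈ S := by
    refine ⟨⟨by omega, le_refl _, ?_⟩, by omega⟩
    intro j hj1 hj2; omega
  have hKmem : kmin ρ n κ (i + 1) ∈ S := Nat.sInf_mem ⟨n - 1, hmem⟩
  set K := kmin ρ n κ (i + 1) with hKdef
  obtain ⟨hKbind, hKge⟩ := hKmem
  have hKle : K ≤ n - 1 := hKbind.2.1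
  constructor
  · intro hBi
    exact hBi.2.2 K hKge hKle
  · intro hlt
    refine ⟨by omega, by omega, ?_⟩
    -- first: for j ≥ K, rhoProd i j ≤ rhoProd i K
    have caseGE : ∀ j, K ≤ j → j ≤ n - 1 → rhoProd ρ i j ≤ rhoProd ρ i K := by
      intro j hKj hjn
      rcases eq_or_lt_of_le hKj with h | h
      · rw [h]
      · have hmul := rhoProd_mul ρ (show i ≤ K by omega) (show K ≤ j by omega)
        have h1 : rhoProd ρ K j < 1 := hKbind.2.2 j (by omega) hjn
        have h2 : 0 < rhoProd ρ i K := hpos i K (by omega)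
        nlinarith [hpos K j (by omega)]
    have key : ∀ d j, n - 1 - j ≤ d → i + 1 ≤ j → j ≤ n - 1 →
        rhoProd ρ i j ≤ rhoProd ρ i K := by
      intro d
      induction d with
      | zero =>
        intro j hd hj1 hj2
        exact caseGE j (by omega) hj2
      | succ d ih =>
        intro j hd hj1 hj2
        rcases le_or_gt K j with h | h
        · exact caseGE j h hj2
        · -- j < K, so j ∉ S, so j not binding
          have hjnS : j ∉ S := Nat.notMem_of_lt_sInf h
          have : ¬ Binding ρ n κ j := fun hb => hjnS ⟨hb, hj1⟩
          unfold Binding at this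
          push_neg at this
          obtain ⟨j', hj'1, hj'2, hj'3⟩ := this (by omega) hj2
          have hstep := rhoProd_mul ρ (show i ≤ j by omega) (show j ≤ j' by omega)
          have h2 : rhoProd ρ i j' ≤ rhoProd ρ i K := ih j' (by omega) (by omega) hj'2
          nlinarith [hpos i j (by omega)]
    intro j hj1 hj2
    exact lt_of_le_of_lt (key (n - 1 - j) j le_rfl hj1 hj2) hlt
end

section
/- For every i ∈ {κ+1, …, n−2}: bar-α_{i+1}/ρ_{i+1} > 1 if and only if i ∈ H. -/
open Finset

section

variable {ρ : ℕ → ℝ} {n κ i j k : ℕ}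

lemma rhoProd_self_succ (ρ : ℕ → ℝ) (i : ℕ) : rhoProd ρ i (i + 1) = ρ (i + 1) := by
  simp [rhoProd]

lemma rhoProd_mul_rhoProd (ρ : ℕ → ℝ) {k m j : ℕ} (hkm : k ≤ m) (hmj : m ≤ j) :
    rhoProd ρ k m * rhoProd ρ m j = rhoProd ρ k j := by
  simp only [rhoProd, Finset.Icc_add_one_left_eq_Ioc]
  exact Finset.prod_Ioc_consecutive _ hkm hmj

lemma rhoProd_pos (hρ : ∀ i, 1 ≤ i → i ≤ n → 0 < ρ i) (k : ℕ) (hj : j ≤ n) :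
    0 < rhoProd ρ k j :=
  Finset.prod_pos fun i hi ↦ by
    rw [Finset.mem_Icc] at hi
    exact hρ i (by omega) (by omega)

lemma binding_sub_one (h : κ + 1 ≤ n - 1) : Binding ρ n κ (n - 1) :=
  ⟨h, le_rfl, fun _ hj hjn ↦ absurd hjn (by omega)⟩

lemma kmin_spec (h : κ + 1 ≤ n - 1) (hi : i ≤ n - 1) :
    Binding ρ n κ (kmin ρ n κ i) ∧ i ≤ kmin ρ n κ i :=
  Nat.sInf_mem (s := {k | Binding ρ n κ k ∧ i ≤ k}) ⟨n - 1, binding_sub_one h, hi⟩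

lemma kmin_le (hk : Binding ρ n κ k) (hik : i ≤ k) : kmin ρ n κ i ≤ k :=
  Nat.sInf_le ⟨hk, hik⟩

lemma barAlpha_succ_div (α : ℕ → ℝ) (hi : κ < i + 1) (hin : i + 1 ≤ n - 1) :
    barAlpha ρ α n κ (i + 1) / ρ (i + 1) = (rhoProd ρ i (kmin ρ n κ (i + 1)))⁻¹ := by
  have hik := (kmin_spec (ρ := ρ) (κ := κ) (by omega) hin).2
  rw [barAlpha, if_neg (by omega), ← rhoProd_mul_rhoProd ρ i.le_succ hik, rhoProd_self_succ,
    mul_inv, div_eq_mul_inv, mul_comm]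

lemma rhoProd_lt_one_of_binding_le (hρ : ∀ i, 1 ≤ i → i ≤ n → 0 < ρ i)
    (hk : Binding ρ n κ k) (hik : i ≤ k) (hi : rhoProd ρ i k < 1) (hkj : k ≤ j)
    (hjn : j ≤ n - 1) : rhoProd ρ i j < 1 := by
  rcases hkj.eq_or_lt with rfl | hkj
  · exact hi
  rw [← rhoProd_mul_rhoProd ρ hik hkj.le]
  exact mul_lt_one_of_nonneg_of_lt_one_left (rhoProd_pos hρ i (by omega)).le hi
    (hk.2.2 j hkj hjn).le

lemma binding_of_rhoProd_kmin_lt_one (hρ : ∀ i, 1 ≤ i → i ≤ n → 0 < ρ i)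
    (hi : κ + 1 ≤ i) (hin : i + 1 ≤ n - 1) (h : rhoProd ρ i (kmin ρ n κ (i + 1)) < 1) :
    Binding ρ n κ i := by
  obtain ⟨hk, hik⟩ := kmin_spec (ρ := ρ) (κ := κ) (i := i + 1) (by omega) hin
  refine ⟨hi, by omega, fun j hij hjn ↦ ?_⟩
  induction j using Nat.strong_decreasing_induction with
  | base => exact ⟨n - 1, fun m hm _ hmn ↦ absurd hmn (by omega)⟩
  | step j ih =>
    by_cases hkj : kmin ρ n κ (i + 1) ≤ j
    · exact rhoProd_lt_one_of_binding_le hρ hk (by omega) h hkj hjn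
    obtain ⟨j', hjj', hj'n, hone⟩ : ∃ j', j < j' ∧ j' ≤ n - 1 ∧ 1 ≤ rhoProd ρ j j' := by
      by_contra! hnot
      exact hkj (kmin_le ⟨by omega, hjn, hnot⟩ hij)
    calc rhoProd ρ i j
        ≤ rhoProd ρ i j * rhoProd ρ j j' :=
          le_mul_of_one_le_right (rhoProd_pos hρ i (by omega)).le hone
      _ = rhoProd ρ i j' := rhoProd_mul_rhoProd ρ (by omega) hjj'.le
      _ < 1 := ih j' hjj' (by omega) hj'n

lemma one_lt_inv_rhoProd_kmin_iff_binding (hρ : ∀ i, 1 ≤ i → i ≤ n → 0 < ρ i)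
    (hi : κ + 1 ≤ i) (hin : i + 1 ≤ n - 1) :
    1 < (rhoProd ρ i (kmin ρ n κ (i + 1)))⁻¹ ↔ Binding ρ n κ i := by
  obtain ⟨hk, hik⟩ := kmin_spec (ρ := ρ) (κ := κ) (i := i + 1) (by omega) hin
  rw [one_lt_inv_iff₀, and_iff_right (rhoProd_pos hρ i (hk.2.1.trans (Nat.sub_le n 1)))]
  exact ⟨binding_of_rhoProd_kmin_lt_one hρ hi hin, fun hb ↦ hb.2.2 _ hik hk.2.1⟩

end

theorem stmt3_general (n : ℕ) (ρ α : ℕ → ℝ)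
    (hρ : ∀ i, 1 ≤ i → i ≤ n → 0 < ρ i)
    (κ : ℕ) :
    ∀ i, κ + 1 ≤ i → i ≤ n - 2 →
      (1 < barAlpha ρ α n κ (i + 1) / ρ (i + 1) ↔ Binding ρ n κ i) := by
  intro i hi hin
  rw [barAlpha_succ_div α (by omega) (by omega)]
  exact one_lt_inv_rhoProd_kmin_iff_binding hρ hi (by omega)

theorem stmt3 (n : ℕ) (hn : 2 ≤ n) (ρ α : ℕ → ℝ)
    (hρ : ∀ i, 1 ≤ i → i ≤ n → 0 < ρ i)
    (hα0pos : 0 < α 0) (hα0le : α 0 ≤ 1)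
    (hrec : ∀ k, 1 ≤ k → k ≤ n → α k = min (α (k - 1) * ρ k) 1)
    (κ : ℕ) (hκle : κ ≤ n - 1) (hκ1 : α κ = 1)
    (hκmax : ∀ k, k ≤ n - 1 → α k = 1 → k ≤ κ) :
    ∀ i, κ + 1 ≤ i → i ≤ n - 2 →
      (1 < barAlpha ρ α n κ (i + 1) / ρ (i + 1) ↔ Binding ρ n κ i) :=
  stmt3_general n ρ α hρ κ
end

section
/- One has bar-α_{n−1} = 1, and for every i ∈ {κ+1, …, n−2}: bar-α_i = 1 if i ∈ H, while bar-α_i = bar-α_{i+1}/ρ_{i+1} if i ∉ H. (In other words, (bar-α_i) satisfies the backward recursion bar-α_{n−1} = 1, bar-α_i = 1 for i ∈ H, bar-α_i = bar-α_{i+1}/ρ_{i+1} for i ∉ H.) -/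
open Finset

lemma rhoProd_self (ρ : ℕ → ℝ) (a : ℕ) : rhoProd ρ a a = 1 := by
  simp [rhoProd]

lemma rhoProd_split (ρ : ℕ → ℝ) (a b : ℕ) (h : a + 1 ≤ b) :
    rhoProd ρ a b = ρ (a + 1) * rhoProd ρ (a + 1) b := by
  unfold rhoProd
  have h1 : a + 1 ∈ Finset.Icc (a + 1) b := by simp [h]
  rw [← Finset.mul_prod_erase _ _ h1, Finset.Icc_erase_left]
  congr 1
  rw [Finset.Icc_add_one_left_eq_Ioc]

lemma binding_last (ρ : ℕ → ℝ) (n κ : ℕ) (h : κ + 1 ≤ n - 1) :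
    Binding ρ n κ (n - 1) :=
  ⟨h, le_refl _, fun j hj1 hj2 => by omega⟩

theorem stmt4 (n : ℕ) (hn : 2 ≤ n) (ρ α : ℕ → ℝ)
    (hρ : ∀ i, 1 ≤ i → i ≤ n → 0 < ρ i)
    (hα0pos : 0 < α 0) (hα0le : α 0 ≤ 1)
    (hrec : ∀ k, 1 ≤ k → k ≤ n → α k = min (α (k - 1) * ρ k) 1)
    (κ : ℕ) (hκle : κ ≤ n - 1) (hκ1 : α κ = 1)
    (hκmax : ∀ k, k ≤ n - 1 → α k = 1 → k ≤ κ) :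
    barAlpha ρ α n κ (n - 1) = 1 ∧
      ∀ i, κ + 1 ≤ i → i ≤ n - 2 →
        (Binding ρ n κ i → barAlpha ρ α n κ i = 1) ∧
        (¬ Binding ρ n κ i → barAlpha ρ α n κ i = barAlpha ρ α n κ (i + 1) / ρ (i + 1)) := by
  constructor
  · by_cases hc : n - 1 ≤ κ
    · have hk : κ = n - 1 := le_antisymm hκle hc
      rw [barAlpha, if_pos hc, ← hk, hκ1]
    · push_neg at hc
      have hκ1' : κ + 1 ≤ n - 1 := hc
      have hB : Binding ρ n κ (n - 1) := binding_last ρ n κ hκ1'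
      have hmem : (n - 1) ∈ {k | Binding ρ n κ k ∧ n - 1 ≤ k} := ⟨hB, le_refl _⟩
      have h1 : kmin ρ n κ (n - 1) ≤ n - 1 := Nat.sInf_le hmem
      have h2 : n - 1 ≤ kmin ρ n κ (n - 1) :=
        (Nat.sInf_mem (⟨n - 1, hmem⟩ : Set.Nonempty _)).2
      have hk : kmin ρ n κ (n - 1) = n - 1 := le_antisymm h1 h2
      rw [barAlpha, if_neg (by omega), hk, rhoProd_self, inv_one]
  · intro i hi1 hi2
    have hin : i ≤ n - 2 := hi2
    have hκn : κ + 1 ≤ n - 1 := by omega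
    constructor
    · intro hB
      have hmem : i ∈ {k | Binding ρ n κ k ∧ i ≤ k} := ⟨hB, le_refl _⟩
      have h1 : kmin ρ n κ i ≤ i := Nat.sInf_le hmem
      have h2 : i ≤ kmin ρ n κ i := (Nat.sInf_mem (⟨i, hmem⟩ : Set.Nonempty _)).2
      rw [barAlpha, if_neg (by omega), le_antisymm h1 h2, rhoProd_self, inv_one]
    · intro hB
      have hset : {k | Binding ρ n κ k ∧ i ≤ k} = {k | Binding ρ n κ k ∧ i + 1 ≤ k} := by
        ext k
        constructor
        · rintro ⟨hBk, hik⟩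
          refine ⟨hBk, ?_⟩
          rcases eq_or_lt_of_le hik with h | h
          · exact absurd (h ▸ hBk) hB
          · exact h
        · rintro ⟨hBk, hik⟩
          exact ⟨hBk, by omega⟩
      have hkeq : kmin ρ n κ i = kmin ρ n κ (i + 1) := by
        unfold kmin; rw [hset]
      have hBlast : Binding ρ n κ (n - 1) := binding_last ρ n κ hκn
      have hmem : (n - 1) ∈ {k | Binding ρ n κ k ∧ i + 1 ≤ k} := ⟨hBlast, by omega⟩
      have hge : i + 1 ≤ kmin ρ n κ (i + 1) :=
        (Nat.sInf_mem (⟨n - 1, hmem⟩ : Set.Nonempty _)).2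
      rw [barAlpha, barAlpha, if_neg (by omega), if_neg (by omega), hkeq,
        rhoProd_split ρ i (kmin ρ n κ (i + 1)) hge, mul_inv_rev, div_eq_mul_inv]
end

section
/- For every i ∈ {κ+1, …, n−1}: i ∈ H if and only if α_j < α_i for every j ∈ {i+1, …, n−1}. (Hence the set H of binding indices is uniquely determined by the sequence (α_i).) -/
open Finset

theorem stmt9 (n : ℕ) (hn : 2 ≤ n) (ρ α : ℕ → ℝ)
    (hρ : ∀ i, 1 ≤ i → i ≤ n → 0 < ρ i)
    (hα0pos : 0 < α 0) (hα0le : α 0 ≤ 1)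
    (hrec : ∀ k, 1 ≤ k → k ≤ n → α k = min (α (k - 1) * ρ k) 1)
    (κ : ℕ) (hκle : κ ≤ n - 1) (hκ1 : α κ = 1)
    (hκmax : ∀ k, k ≤ n - 1 → α k = 1 → k ≤ κ) :
    ∀ i, κ + 1 ≤ i → i ≤ n - 1 →
      (Binding ρ n κ i ↔ ∀ j, i + 1 ≤ j → j ≤ n - 1 → α j < α i) := by
  have hαpos : ∀ k, k ≤ n → 0 < α k := by
    intro k
    induction k with
    | zero => intro _; exact hα0pos
    | succ m ih =>
      intro hle
      rw [hrec (m+1) (by omega) hle]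
      simp only [Nat.add_sub_cancel]
      exact lt_min (mul_pos (ih (by omega)) (hρ (m+1) (by omega) hle)) one_pos
  have hkey : ∀ i, κ + 1 ≤ i → ∀ j, i ≤ j → j ≤ n - 1 → α j = α i * rhoProd ρ i j := by
    intro i hi j
    induction j with
    | zero => intro h0 _; omega
    | succ m ih =>
      intro hij hj
      rcases Nat.lt_or_ge i (m+1) with h | h
      · have him : i ≤ m := by omega
        have hm : m ≤ n - 1 := by omega
        have hrec' := hrec (m+1) (by omega) (by omega)
        rw [Nat.add_sub_cancel] at hrec'
        have hne : α (m+1) ≠ 1 := fun h1 => by have := hκmax (m+1) hj h1; omega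
        have h1 : α m * ρ (m+1) < 1 := by
          by_contra hge
          push_neg at hge
          exact hne (by rw [hrec', min_eq_right hge])
        have heq : α (m+1) = α m * ρ (m+1) := by rw [hrec', min_eq_left h1.le]
        rw [heq, ih him hm, rhoProd, rhoProd,
          Finset.prod_Icc_succ_top (by omega : i + 1 ≤ m + 1), mul_assoc]
      · have hie : i = m + 1 := by omega
        subst hie
        rw [rhoProd, Finset.Icc_eq_empty (by omega), Finset.prod_empty, mul_one]
  intro i hi hin
  have hαi : 0 < α i := hαpos i (by omega)
  constructor
  · rintro ⟨_, _, hb⟩ j hj1 hj2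
    rw [hkey i hi j (by omega) hj2]
    calc α i * rhoProd ρ i j < α i * 1 :=
          mul_lt_mul_of_pos_left (hb j hj1 hj2) hαi
      _ = α i := mul_one _
  · intro h
    refine ⟨hi, hin, fun j hj1 hj2 => ?_⟩
    have hlt := h j hj1 hj2
    rw [hkey i hi j (by omega) hj2] at hlt
    have := (mul_lt_mul_iff_right₀ hαi).mp (by linarith : α i * rhoProd ρ i j < α i * 1)
    exact this
end

section
/- Let (ν_ε), (bar-ν_ε), (μ_ε), (bar-μ_ε), ε ∈ (0,1), be families of transition kernels on ℝ that are finite on bounded Borel sets, and let ϰ, ϰ′, ϰ″ > 0. Assume: (h1) there is δ > 0 such that sup over x ∈ K_ϰ(ε) and intervals [a,b] ⊆ K_{ϰ′}(ε) of |ν_ε(x,[a,b]) − bar-ν_ε(x,[a,b])| is o(ε^δ) as ε → 0⁺; (h2) there is δ′ > 0 such that sup over y ∈ K_{ϰ′}(ε) and intervals [a,b] ⊆ K_{ϰ″}(ε) of |μ_ε(y,[a,b]) − bar-μ_ε(y,[a,b])| is o(ε^{δ′}) as ε → 0⁺; (h3) there is p ≥ 0 such that sup over x ∈ K_ϰ(ε)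 of bar-ν_ε(x, K_{ϰ′}(ε)) ≤ l_ε^p for all sufficiently small ε; (h4) there is p′ ≥ 0 such that for all sufficiently small ε and every interval [a,b] ⊆ K_{ϰ″}(ε) there exist two monotone functions φ_{+,ε}, φ_{−,ε} : ℝ → ℝ, each bounded in absolute value by l_ε^{p′}, with bar-μ_ε(y,[a,b]) = φ_{+,ε}(y) + φ_{−,ε}(y) for all y ∈ ℝ. Then there is δ″ > 0 such that sup over x ∈ K_ϰ(ε) and intervals [a,b] ⊆ K_{ϰ″}(ε) of |∫_{K_{ϰ′}(ε)} μ_ε(y,[a,b]) ν_ε(x,dy) − ∫_{K_{ϰ′}(ε)} bar-μ_ε(y,[a,b]) bar-ν_ε(x,dy)| is o(ε^{δ″}) as ε → 0⁺. -/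
open MeasureTheory

/-- `lE ε = log (1/ε)`. -/
noncomputable def lE (ε : ℝ) : ℝ := Real.log (1 / ε)

/-- `K_ϰ(ε) = [-(l_ε)^ϰ, (l_ε)^ϰ]`. -/
noncomputable def Kset (ϰ ε : ℝ) : Set ℝ := Set.Icc (-(lE ε ^ ϰ)) (lE ε ^ ϰ)

/-!
Fix `ε` and `x`, put `A = ν_ε(x, ·)`, `B = ν̄_ε(x, ·)`, `K = K_{ϰ'}(ε)`, and split
`∫_K μ dA - ∫_K μ̄ dB = ∫_K (μ - μ̄) dA + (∫_K μ̄ dA - ∫_K μ̄ dB)`.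
The first term is at most `ε^δ' A(K) ≤ ε^δ' (l_ε^p + ε^δ)`.
For the second, `μ̄(·, [a, b])` is a sum of two monotone functions bounded by `l_ε^p'`. By the
layer-cake formula, the integral over `K` of a function `φ` with `|φ| ≤ M` is
`∫_0^{2M} A({φ + M ≥ t} ∩ K) dt - M A(K)`. For monotone (indeed quasiconcave) `φ` the sets
`{φ + M ≥ t} ∩ K` are intervals, and on an interval `A` and `B` differ by at most `3 ε^δ` (a
closed interval, up to its two endpoints). So the second term is `O(l_ε^p' ε^δ)`, and halving the
exponent absorbs the powers of `l_ε`.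
-/

open Set Filter Topology

theorem eventually_nhdsGT_zero_iff {P : ℝ → Prop} :
    (∀ᶠ ε in 𝓝[>] 0, P ε) ↔ ∃ ε₀, 0 < ε₀ ∧ ∀ ε, 0 < ε → ε < ε₀ → P ε := by
  simp only [eventually_iff, mem_nhdsGT_iff_exists_Ioo_subset, subset_def, mem_Ioo, mem_ofPred_eq]
  exact exists_congr fun ε₀ ↦
    and_congr_right' ⟨fun h ε h0 h1 ↦ h ε ⟨h0, h1⟩, fun h ε hε ↦ h ε hε.1 hε.2⟩

theorem tendsto_lE_rpow_mul_rpow_nhdsGT_zero (q : ℝ) {β : ℝ} (hβ : 0 < β) :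
    Tendsto (fun ε ↦ lE ε ^ q * ε ^ β) (𝓝[>] 0) (𝓝 0) := by
  have h := (isLittleO_abs_log_rpow_rpow_nhdsGT_zero q (neg_neg_of_pos hβ)).mul_isBigO
    (Asymptotics.isBigO_refl (fun ε : ℝ ↦ ε ^ β) _)
  refine (Asymptotics.isLittleO_one_iff ℝ).1 (h.congr' ?_ ?_)
  · filter_upwards [Ioo_mem_nhdsGT one_pos] with ε hε
    rw [lE, one_div, Real.log_inv, abs_of_neg (Real.log_neg hε.1 hε.2)]
  · filter_upwards [self_mem_nhdsWithin] with ε (hε : 0 < ε)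
    rw [← Real.rpow_add hε, neg_add_cancel, Real.rpow_zero]

theorem rpow_mul_add_mul_rpow_le {ε δ δ' N M c : ℝ} (hε : 0 < ε) (hε1 : ε < 1) (hδ : 0 < δ)
    (hδ' : 0 < δ') (hN : 0 ≤ N) (hM : 0 ≤ M) (hNε : N * ε ^ (min δ δ' / 2) < c / 16)
    (hcε : ε ^ (min δ δ' / 2) < c / 16) (hMε : M * ε ^ (min δ δ' / 2) < c / 16) :
    ε ^ δ' * (N + ε ^ δ) + 14 * M * ε ^ δ ≤ c * ε ^ (min δ δ' / 2) := by
  set e := ε ^ (min δ δ' / 2)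
  have he : 0 < e := Real.rpow_pos_of_pos hε _
  have he1 : e ≤ 1 := Real.rpow_le_one hε.le hε1.le (by positivity)
  have hsq : ∀ γ, min δ δ' ≤ γ → ε ^ γ ≤ e * e := fun γ hγ ↦ by
    rw [← Real.rpow_add hε, add_halves]
    exact Real.rpow_le_rpow_of_exponent_ge hε hε1.le hγ
  have hx := hsq δ (min_le_left _ _)
  have hy := hsq δ' (min_le_right _ _)
  have hx0 : 0 ≤ ε ^ δ := Real.rpow_nonneg hε.le _
  calc ε ^ δ' * (N + ε ^ δ) + 14 * M * ε ^ δ ≤ e * e * (N + e * e) + 14 * M * (e * e) := by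
        gcongr
    _ = e * (N * e) + e * (e * e) * e + 14 * e * (M * e) := by ring
    _ ≤ e * (c / 16) + e * 1 * (c / 16) + 14 * e * (c / 16) := by
        gcongr
        nlinarith
    _ = c * e := by ring

theorem integral_eq_integral_Ioc_measureReal_le_sub_of_abs_le {α : Type*} [MeasurableSpace α]
    {ρ : Measure α} [IsFiniteMeasure ρ] {φ : α → ℝ} (hφ : Measurable φ) {M : ℝ}
    (hφM : ∀ y, |φ y| ≤ M) :
    ∫ y, φ y ∂ρ = (∫ t in Ioc 0 (2 * M), ρ.real {y | t ≤ φ y + M}) - M * ρ.real univ := by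
  have hφi : Integrable φ ρ := .of_bound hφ.aestronglyMeasurable M (.of_forall hφM)
  have hlayer := (hφi.add (integrable_const M)).integral_eq_integral_Ioc_meas_le
    (f := fun y ↦ φ y + M) (M := 2 * M)
    (.of_forall fun y ↦ show 0 ≤ φ y + M by linarith [neg_abs_le (φ y), hφM y])
    (.of_forall fun y ↦ show φ y + M ≤ 2 * M by linarith [le_abs_self (φ y), hφM y])
  rw [integral_add hφi (integrable_const M), integral_const, smul_eq_mul] at hlayer
  linarith

theorem QuasiconcaveOn.measurable {φ : ℝ → ℝ} (hφ : QuasiconcaveOn ℝ univ φ) : Measurable φ :=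
  measurable_of_Ici fun t ↦ by
    simpa [preimage, Ici] using (hφ t).ordConnected.measurableSet

def CloseOnIcc (A B : Measure ℝ) (l u η : ℝ) : Prop :=
  ∀ a b, a ≤ b → Icc a b ⊆ Icc l u → |A.real (Icc a b) - B.real (Icc a b)| ≤ η

namespace CloseOnIcc

variable {A B : Measure ℝ} {l u η : ℝ}

theorem abs_measureReal_Icc_sub_le (hAB : CloseOnIcc A B l u η) (hη : 0 ≤ η) {a b : ℝ}
    (h : Icc a b ⊆ Icc l u) : |A.real (Icc a b) - B.real (Icc a b)| ≤ η := by
  rcases le_or_gt a b with hab | hab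
  · exact hAB a b hab h
  · simpa [Icc_eq_empty_of_lt hab] using hη

theorem abs_measureReal_sub_le_of_subsingleton (hAB : CloseOnIcc A B l u η) (hη : 0 ≤ η)
    {T : Set ℝ} (hT : T.Subsingleton) (hTK : T ⊆ Icc l u) : |A.real T - B.real T| ≤ η := by
  rcases hT.eq_empty_or_singleton with rfl | ⟨t, rfl⟩
  · simpa using hη
  · rw [← Icc_self] at hTK ⊢
    exact hAB.abs_measureReal_Icc_sub_le hη hTK

variable [IsFiniteMeasure A] [IsFiniteMeasure B]

theorem abs_measureReal_sub_le_of_subset_pair (hAB : CloseOnIcc A B l u η) (hη : 0 ≤ η)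
    {D : Set ℝ} {a b : ℝ} (hD : D ⊆ {a, b}) (hDK : D ⊆ Icc l u) :
    |A.real D - B.real D| ≤ 2 * η := by
  have split : ∀ ρ : Measure ℝ, [IsFiniteMeasure ρ] →
      ρ.real D = ρ.real (D ∩ {a}) + ρ.real (D \ {a}) :=
    fun ρ _ ↦ (measureReal_inter_add_sdiff (measurableSet_singleton a)).symm
  have ha := hAB.abs_measureReal_sub_le_of_subsingleton hη
    ((subsingleton_singleton (a := a)).anti inter_subset_right) (inter_subset_left.trans hDK)
  have hb := hAB.abs_measureReal_sub_le_of_subsingleton (T := D \ {a}) hη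
    ((subsingleton_singleton (a := b)).anti fun y hy ↦ (hD hy.1).resolve_left hy.2)
    (sdiff_subset.trans hDK)
  rw [split A, split B]
  rw [abs_le] at ha hb ⊢
  constructor <;> linarith

theorem abs_measureReal_sub_le_of_ordConnected (hAB : CloseOnIcc A B l u η) (hη : 0 ≤ η)
    {s : Set ℝ} (hs : s.OrdConnected) (hsK : s ⊆ Icc l u) : |A.real s - B.real s| ≤ 3 * η := by
  rcases s.eq_empty_or_nonempty with rfl | hne
  · simp only [measureReal_empty, sub_self, abs_zero]
    linarith
  have hbdd : BddBelow s := bddBelow_Icc.mono hsK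
  have hbda : BddAbove s := bddAbove_Icc.mono hsK
  have hsab : s ⊆ Icc (sInf s) (sSup s) := subset_Icc_csInf_csSup hbdd hbda
  have hIcc : Icc (sInf s) (sSup s) ⊆ Icc l u :=
    Icc_subset_Icc (le_csInf hne fun y hy ↦ (hsK hy).1) (csSup_le hne fun y hy ↦ (hsK hy).2)
  have hD : Icc (sInf s) (sSup s) \ s ⊆ {sInf s, sSup s} := by
    intro y ⟨hy, hys⟩
    have hIoo := (IsConnected.Ioo_csInf_csSup_subset ⟨hne, hs.isPreconnected⟩ hbdd hbda).mt hys
    rcases hy.1.eq_or_lt with h | h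
    · exact .inl h.symm
    · exact .inr (hy.2.eq_of_not_lt fun h' ↦ hIoo ⟨h, h'⟩)
  have split : ∀ ρ : Measure ℝ, [IsFiniteMeasure ρ] →
      ρ.real s = ρ.real (Icc (sInf s) (sSup s)) - ρ.real (Icc (sInf s) (sSup s) \ s) := by
    intro ρ _
    rw [← measureReal_inter_add_sdiff (s := Icc (sInf s) (sSup s)) hs.measurableSet,
      inter_eq_right.2 hsab, add_sub_cancel_right]
  have hIcc_close := hAB.abs_measureReal_Icc_sub_le hη hIcc
  have hD_close := hAB.abs_measureReal_sub_le_of_subset_pair hη hD (sdiff_subset.trans hIcc)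
  rw [split A, split B]
  rw [abs_le] at hIcc_close hD_close ⊢
  constructor <;> linarith

theorem abs_setIntegral_sub_le_of_quasiconcaveOn (hAB : CloseOnIcc A B l u η) (hη : 0 ≤ η)
    {φ : ℝ → ℝ} (hφ : QuasiconcaveOn ℝ univ φ) {M : ℝ} (hφM : ∀ y, |φ y| ≤ M) :
    |∫ y in Icc l u, φ y ∂A - ∫ y in Icc l u, φ y ∂B| ≤ 7 * M * η := by
  set K := Icc l u
  set level : ℝ → Set ℝ := fun t ↦ {y | t ≤ φ y + M} ∩ K
  have hM : 0 ≤ M := (abs_nonneg _).trans (hφM 0)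
  have layer : ∀ ρ : Measure ℝ, [IsFiniteMeasure ρ] →
      ∫ y in K, φ y ∂ρ = (∫ t in Ioc 0 (2 * M), ρ.real (level t)) - M * ρ.real K := by
    intro ρ _
    simpa [level, measureReal_restrict_apply' (s := K) measurableSet_Icc] using
      integral_eq_integral_Ioc_measureReal_le_sub_of_abs_le (ρ := ρ.restrict K) hφ.measurable hφM
  have hint : ∀ ρ : Measure ℝ, [IsFiniteMeasure ρ] →
      IntegrableOn (fun t ↦ ρ.real (level t)) (Ioc 0 (2 * M)) := fun ρ _ ↦
    (AntitoneOn.integrableOn_isCompact isCompact_Icc fun s _ t _ hst ↦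
      measureReal_mono (show level t ⊆ level s from fun y hy ↦ ⟨hst.trans hy.1, hy.2⟩)).mono_set
      Ioc_subset_Icc_self
  have hlevel : ∀ t, |A.real (level t) - B.real (level t)| ≤ 3 * η := fun t ↦
    hAB.abs_measureReal_sub_le_of_ordConnected hη
      (by simpa [sub_le_iff_le_add] using (hφ (t - M)).ordConnected.inter ordConnected_Icc)
      inter_subset_right
  have hlayers : |(∫ t in Ioc 0 (2 * M), A.real (level t)) - ∫ t in Ioc 0 (2 * M), B.real (level t)|
      ≤ 3 * η * (2 * M) := by
    rw [← integral_sub (hint A) (hint B)]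
    simpa [Real.volume_real_Ioc_of_le (by linarith : 0 ≤ 2 * M)] using
      norm_setIntegral_le_of_norm_le_const (f := fun t ↦ A.real (level t) - B.real (level t))
        (measure_Ioc_lt_top (μ := volume) (a := 0) (b := 2 * M)) fun t _ ↦ hlevel t
  have hK := hAB.abs_measureReal_Icc_sub_le hη subset_rfl
  rw [layer A, layer B]
  calc _ = |((∫ t in Ioc 0 (2 * M), A.real (level t)) - ∫ t in Ioc 0 (2 * M), B.real (level t))
        - M * (A.real K - B.real K)| := by ring_nf
    _ ≤ 3 * η * (2 * M) + M * η := by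
        grw [abs_sub, hlayers, abs_mul, abs_of_nonneg hM, hK]
    _ = 7 * M * η := by ring

end CloseOnIcc

theorem CloseOnIcc.abs_setIntegral_sub_setIntegral_le {A B : Measure ℝ} {l u η η' M N : ℝ}
    (hA : A (Icc l u) ≠ ⊤) (hB : B (Icc l u) ≠ ⊤) (hAB : CloseOnIcc A B l u η) (hη : 0 ≤ η)
    (hη' : 0 ≤ η') (hBN : B.real (Icc l u) ≤ N) {f g φ₁ φ₂ : ℝ → ℝ} (hf : Measurable f)
    (hg : ∀ y, g y = φ₁ y + φ₂ y) (hφ₁ : QuasiconcaveOn ℝ univ φ₁)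
    (hφ₂ : QuasiconcaveOn ℝ univ φ₂) (hφ₁M : ∀ y, |φ₁ y| ≤ M) (hφ₂M : ∀ y, |φ₂ y| ≤ M)
    (hfg : ∀ y ∈ Icc l u, |f y - g y| ≤ η') :
    |∫ y in Icc l u, f y ∂A - ∫ y in Icc l u, g y ∂B| ≤ η' * (N + η) + 14 * M * η := by
  have : IsFiniteMeasure (A.restrict (Icc l u)) := isFiniteMeasure_restrict.2 hA
  have : IsFiniteMeasure (B.restrict (Icc l u)) := isFiniteMeasure_restrict.2 hB
  have hAB' : CloseOnIcc (A.restrict (Icc l u)) (B.restrict (Icc l u)) l u η := fun a b hab h ↦ by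
    simpa [measureReal_restrict_apply measurableSet_Icc, inter_eq_left.2 h] using hAB a b hab h
  have hφ : ∀ {φ : ℝ → ℝ}, QuasiconcaveOn ℝ univ φ → (∀ y, |φ y| ≤ M) →
      |∫ y in Icc l u, φ y ∂A - ∫ y in Icc l u, φ y ∂B| ≤ 7 * M * η := fun hφ hφM ↦ by
    simpa [Measure.restrict_restrict_of_subset subset_rfl] using
      hAB'.abs_setIntegral_sub_le_of_quasiconcaveOn hη hφ hφM
  have hint : ∀ {ρ : Measure ℝ}, ρ (Icc l u) ≠ ⊤ → ∀ {φ : ℝ → ℝ}, QuasiconcaveOn ℝ univ φ →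
      (∀ y, |φ y| ≤ M) → IntegrableOn φ (Icc l u) ρ := fun hρ _ hφ hφM ↦
    Measure.integrableOn_of_bounded hρ hφ.measurable.aestronglyMeasurable (.of_forall hφM)
  have hsplit : ∀ {ρ : Measure ℝ}, ρ (Icc l u) ≠ ⊤ →
      ∫ y in Icc l u, g y ∂ρ = ∫ y in Icc l u, φ₁ y ∂ρ + ∫ y in Icc l u, φ₂ y ∂ρ := fun hρ ↦ by
    simp_rw [hg]
    exact integral_add (hint hρ hφ₁ hφ₁M) (hint hρ hφ₂ hφ₂M)
  have hg' : g = φ₁ + φ₂ := funext hg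
  have hgA : IntegrableOn g (Icc l u) A := hg' ▸ (hint hA hφ₁ hφ₁M).add (hint hA hφ₂ hφ₂M)
  have hfgA : IntegrableOn (fun y ↦ f y - g y) (Icc l u) A :=
    Measure.integrableOn_of_bounded hA
      (hf.sub (hg' ▸ hφ₁.measurable.add hφ₂.measurable)).aestronglyMeasurable
      ((ae_restrict_iff' measurableSet_Icc).2 (.of_forall hfg))
  have hfA : IntegrableOn f (Icc l u) A :=
    (hfgA.add hgA).congr_fun (fun y _ ↦ sub_add_cancel _ _) measurableSet_Icc
  have hAN : A.real (Icc l u) ≤ N + η := by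
    linarith [(abs_le.1 (hAB.abs_measureReal_Icc_sub_le hη subset_rfl)).2]
  have hfirst : |∫ y in Icc l u, f y ∂A - ∫ y in Icc l u, g y ∂A| ≤ η' * (N + η) := by
    rw [← integral_sub hfA hgA]
    calc |∫ y in Icc l u, f y - g y ∂A| ≤ η' * A.real (Icc l u) :=
          norm_setIntegral_le_of_norm_le_const (f := fun y ↦ f y - g y) hA.lt_top hfg
      _ ≤ η' * (N + η) := by gcongr
  have hsecond : |∫ y in Icc l u, g y ∂A - ∫ y in Icc l u, g y ∂B| ≤ 14 * M * η := by
    rw [hsplit hA, hsplit hB]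
    calc _ = |(∫ y in Icc l u, φ₁ y ∂A - ∫ y in Icc l u, φ₁ y ∂B) +
          (∫ y in Icc l u, φ₂ y ∂A - ∫ y in Icc l u, φ₂ y ∂B)| := by ring_nf
      _ ≤ 7 * M * η + 7 * M * η :=
          (abs_add_le _ _).trans (add_le_add (hφ hφ₁ hφ₁M) (hφ hφ₂ hφ₂M))
      _ = 14 * M * η := by ring
  calc _ ≤ _ := abs_sub_le _ (∫ y in Icc l u, g y ∂A) _
    _ ≤ _ := add_le_add hfirst hsecond

theorem stmt11_general (ν νbar μ μbar : ℝ → ProbabilityTheory.Kernel ℝ ℝ) (ϰ ϰ' ϰ'' : ℝ)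
    (hfin : ∀ ε ∈ Set.Ioo (0:ℝ) 1, ∀ x : ℝ, ∀ s : Set ℝ, Bornology.IsBounded s →
      ν ε x s < ⊤ ∧ νbar ε x s < ⊤ ∧ μ ε x s < ⊤ ∧ μbar ε x s < ⊤)
    (h1 : ∃ δ : ℝ, 0 < δ ∧ ∀ c : ℝ, 0 < c → ∃ ε₀ : ℝ, 0 < ε₀ ∧
      ∀ ε : ℝ, 0 < ε → ε < ε₀ → ε < 1 →
      ∀ x ∈ Kset ϰ ε, ∀ a b : ℝ, a ≤ b → Set.Icc a b ⊆ Kset ϰ' ε →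
        |(ν ε x (Set.Icc a b)).toReal - (νbar ε x (Set.Icc a b)).toReal| ≤ c * ε ^ δ)
    (h2 : ∃ δ' : ℝ, 0 < δ' ∧ ∀ c : ℝ, 0 < c → ∃ ε₀ : ℝ, 0 < ε₀ ∧
      ∀ ε : ℝ, 0 < ε → ε < ε₀ → ε < 1 →
      ∀ y ∈ Kset ϰ' ε, ∀ a b : ℝ, a ≤ b → Set.Icc a b ⊆ Kset ϰ'' ε →
        |(μ ε y (Set.Icc a b)).toReal - (μbar ε y (Set.Icc a b)).toReal| ≤ c * ε ^ δ')
    (h3 : ∃ p : ℝ, 0 ≤ p ∧ ∃ ε₀ : ℝ, 0 < ε₀ ∧ ∀ ε : ℝ, 0 < ε → ε < ε₀ → ε < 1 →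
      ∀ x ∈ Kset ϰ ε, (νbar ε x (Kset ϰ' ε)).toReal ≤ lE ε ^ p)
    (h4 : ∃ p' : ℝ, 0 ≤ p' ∧ ∃ ε₀ : ℝ, 0 < ε₀ ∧ ∀ ε : ℝ, 0 < ε → ε < ε₀ → ε < 1 →
      ∀ a b : ℝ, a ≤ b → Set.Icc a b ⊆ Kset ϰ'' ε →
      ∃ φp φm : ℝ → ℝ,
        (Monotone φp ∨ Antitone φp) ∧ (Monotone φm ∨ Antitone φm) ∧
        (∀ y, |φp y| ≤ lE ε ^ p') ∧ (∀ y, |φm y| ≤ lE ε ^ p') ∧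
        ∀ y, (μbar ε y (Set.Icc a b)).toReal = φp y + φm y) :
    ∃ δ'' : ℝ, 0 < δ'' ∧ ∀ c : ℝ, 0 < c → ∃ ε₀ : ℝ, 0 < ε₀ ∧
      ∀ ε : ℝ, 0 < ε → ε < ε₀ → ε < 1 →
      ∀ x ∈ Kset ϰ ε, ∀ a b : ℝ, a ≤ b → Set.Icc a b ⊆ Kset ϰ'' ε →
        |(∫ y in Kset ϰ' ε, (μ ε y (Set.Icc a b)).toReal ∂(ν ε x)) -
          (∫ y in Kset ϰ' ε, (μbar ε y (Set.Icc a b)).toReal ∂(νbar ε x))| ≤ c * ε ^ δ'' := by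
  obtain ⟨δ, hδ, h1⟩ := h1
  obtain ⟨δ', hδ', h2⟩ := h2
  obtain ⟨p, -, h3⟩ := h3
  obtain ⟨p', -, h4⟩ := h4
  refine ⟨min δ δ' / 2, by positivity, fun c hc ↦ eventually_nhdsGT_zero_iff.1 ?_⟩
  have small : ∀ q : ℝ, ∀ᶠ ε in 𝓝[>] 0, lE ε ^ q * ε ^ (min δ δ' / 2) < c / 16 := fun q ↦
    (tendsto_order.1 (tendsto_lE_rpow_mul_rpow_nhdsGT_zero q (by positivity))).2 (c / 16)
      (by positivity)
  filter_upwards [eventually_nhdsGT_zero_iff.2 (h1 1 one_pos),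
    eventually_nhdsGT_zero_iff.2 (h2 1 one_pos), eventually_nhdsGT_zero_iff.2 h3,
    eventually_nhdsGT_zero_iff.2 h4, self_mem_nhdsWithin, small p, small 0, small p']
    with ε h1 h2 h3 h4 (hε : 0 < ε) hp h0 hp' hε1 x hx a b hab habK
  simp only [one_mul] at h1 h2
  obtain ⟨φ₁, φ₂, hφ₁, hφ₂, hφ₁M, hφ₂M, hg⟩ := h4 hε1 a b hab habK
  have hfin := hfin ε ⟨hε, hε1⟩ x _ (Metric.isBounded_Icc (-(lE ε ^ ϰ')) (lE ε ^ ϰ'))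
  have hlE : 0 ≤ lE ε := Real.log_nonneg (by rw [one_div]; exact one_le_inv₀ hε |>.2 hε1.le)
  have hquasi : ∀ {φ : ℝ → ℝ}, Monotone φ ∨ Antitone φ → QuasiconcaveOn ℝ univ φ :=
    (·.elim Monotone.quasiconcaveOn Antitone.quasiconcaveOn)
  calc _ ≤ ε ^ δ' * (lE ε ^ p + ε ^ δ) + 14 * lE ε ^ p' * ε ^ δ :=
        CloseOnIcc.abs_setIntegral_sub_setIntegral_le hfin.1.ne hfin.2.1.ne (h1 hε1 x hx)
          (by positivity) (by positivity) (h3 hε1 x hx)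
          ((μ ε).measurable_coe measurableSet_Icc).ennreal_toReal hg (hquasi hφ₁) (hquasi hφ₂)
          hφ₁M hφ₂M fun y hy ↦ h2 hε1 y hy a b hab habK
    _ ≤ c * ε ^ (min δ δ' / 2) :=
        rpow_mul_add_mul_rpow_le hε hε1 hδ hδ' (by positivity) (by positivity) hp
          (by simpa using h0) hp'

theorem stmt11 (ν νbar μ μbar : ℝ → ProbabilityTheory.Kernel ℝ ℝ) (ϰ ϰ' ϰ'' : ℝ)
    (hϰ : 0 < ϰ) (hϰ' : 0 < ϰ') (hϰ'' : 0 < ϰ'')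
    (hfin : ∀ ε ∈ Set.Ioo (0:ℝ) 1, ∀ x : ℝ, ∀ s : Set ℝ, Bornology.IsBounded s →
      ν ε x s < ⊤ ∧ νbar ε x s < ⊤ ∧ μ ε x s < ⊤ ∧ μbar ε x s < ⊤)
    (h1 : ∃ δ : ℝ, 0 < δ ∧ ∀ c : ℝ, 0 < c → ∃ ε₀ : ℝ, 0 < ε₀ ∧
      ∀ ε : ℝ, 0 < ε → ε < ε₀ → ε < 1 →
      ∀ x ∈ Kset ϰ ε, ∀ a b : ℝ, a ≤ b → Set.Icc a b ⊆ Kset ϰ' ε →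
        |(ν ε x (Set.Icc a b)).toReal - (νbar ε x (Set.Icc a b)).toReal| ≤ c * ε ^ δ)
    (h2 : ∃ δ' : ℝ, 0 < δ' ∧ ∀ c : ℝ, 0 < c → ∃ ε₀ : ℝ, 0 < ε₀ ∧
      ∀ ε : ℝ, 0 < ε → ε < ε₀ → ε < 1 →
      ∀ y ∈ Kset ϰ' ε, ∀ a b : ℝ, a ≤ b → Set.Icc a b ⊆ Kset ϰ'' ε →
        |(μ ε y (Set.Icc a b)).toReal - (μbar ε y (Set.Icc a b)).toReal| ≤ c * ε ^ δ')
    (h3 : ∃ p : ℝ, 0 ≤ p ∧ ∃ ε₀ : ℝ, 0 < ε₀ ∧ ∀ ε : ℝ, 0 < ε → ε < ε₀ → ε < 1 →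
      ∀ x ∈ Kset ϰ ε, (νbar ε x (Kset ϰ' ε)).toReal ≤ lE ε ^ p)
    (h4 : ∃ p' : ℝ, 0 ≤ p' ∧ ∃ ε₀ : ℝ, 0 < ε₀ ∧ ∀ ε : ℝ, 0 < ε → ε < ε₀ → ε < 1 →
      ∀ a b : ℝ, a ≤ b → Set.Icc a b ⊆ Kset ϰ'' ε →
      ∃ φp φm : ℝ → ℝ,
        (Monotone φp ∨ Antitone φp) ∧ (Monotone φm ∨ Antitone φm) ∧
        (∀ y, |φp y| ≤ lE ε ^ p') ∧ (∀ y, |φm y| ≤ lE ε ^ p') ∧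
        ∀ y, (μbar ε y (Set.Icc a b)).toReal = φp y + φm y) :
    ∃ δ'' : ℝ, 0 < δ'' ∧ ∀ c : ℝ, 0 < c → ∃ ε₀ : ℝ, 0 < ε₀ ∧
      ∀ ε : ℝ, 0 < ε → ε < ε₀ → ε < 1 →
      ∀ x ∈ Kset ϰ ε, ∀ a b : ℝ, a ≤ b → Set.Icc a b ⊆ Kset ϰ'' ε →
        |(∫ y in Kset ϰ' ε, (μ ε y (Set.Icc a b)).toReal ∂(ν ε x)) -
          (∫ y in Kset ϰ' ε, (μbar ε y (Set.Icc a b)).toReal ∂(νbar ε x))| ≤ c * ε ^ δ'' :=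
  stmt11_general ν νbar μ μbar ϰ ϰ' ϰ'' hfin h1 h2 h3 h4
end

section
/- Let d ∈ ℕ, m ≥ 0 and C > 0. Then there is a constant C′ > 0, depending only on C and d, with the following property. Let ε ∈ (0,1), let T ∈ (0, ε^{−1/8}], let r̂ ∈ [0,T], and for i = 1, …, d let a^i : [r̂,T] → [0,∞) be continuous and c^i : [r̂,T] → [0,∞) be nondecreasing. If 0 ≤ a^i(t) ≤ C(ε^m c^i(t) + ε Σ_{k=1}^d ∫_{r̂}^t a^k(s) ds) for all t ∈ [r̂,T] and all i = 1, …, d, then a^i(t) ≤ C′ ε^m Σ_{k=1}^d c^k(t) for all t ∈ [r̂,T] and all i = 1, …, d. -/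
set_option maxHeartbeats 1000000

open MeasureTheory

theorem stmt13 (d : ℕ) (m C : ℝ) (hm : 0 ≤ m) (hC : 0 < C) :
    ∃ C' : ℝ, 0 < C' ∧
      ∀ ε : ℝ, 0 < ε → ε < 1 →
      ∀ T : ℝ, 0 < T → T ≤ ε ^ (-(1 / 8) : ℝ) →
      ∀ rhat : ℝ, 0 ≤ rhat → rhat ≤ T →
      ∀ a c : Fin d → ℝ → ℝ,
        (∀ i, ContinuousOn (a i) (Set.Icc rhat T)) →
        (∀ i, MonotoneOn (c i) (Set.Icc rhat T)) →
        (∀ i, ∀ t ∈ Set.Icc rhat T, 0 ≤ a i t) →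
        (∀ i, ∀ t ∈ Set.Icc rhat T, 0 ≤ c i t) →
        (∀ i, ∀ t ∈ Set.Icc rhat T,
          a i t ≤ C * (ε ^ m * c i t + ε * ∑ k, ∫ s in rhat..t, a k s)) →
        ∀ i, ∀ t ∈ Set.Icc rhat T, a i t ≤ C' * ε ^ m * ∑ k, c k t := by
  refine ⟨C * Real.exp (C * d), by positivity, ?_⟩
  intro ε hε hε1 T hT hTε rhat hr hrT a c ha_cont hc_mono ha0 hc0 hineq i t0 ht0
  have hd : 0 < d := i.pos
  have hd' : (1 : ℝ) ≤ (d : ℝ) := by exact_mod_cast hd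
  -- ε * T ≤ 1
  have hεT : ε * T ≤ 1 := by
    have h78 : ε * ε ^ (-(1 / 8) : ℝ) = ε ^ ((7 / 8 : ℝ)) := by
      nth_rewrite 1 [← Real.rpow_one ε]
      rw [← Real.rpow_add hε]; norm_num
    calc ε * T ≤ ε * ε ^ (-(1 / 8) : ℝ) := mul_le_mul_of_nonneg_left hTε hε.le
      _ = ε ^ ((7 / 8 : ℝ)) := h78
      _ ≤ 1 := Real.rpow_le_one hε.le hε1.le (by norm_num)
  have hεm : 0 < ε ^ m := Real.rpow_pos_of_pos hε m
  set A : ℝ → ℝ := fun t => ∑ k, a k t with hA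
  set B : ℝ → ℝ := fun t => ∫ s in rhat..t, A s with hB
  have hA_cont : ContinuousOn A (Set.Icc rhat T) :=
    continuousOn_finset_sum _ fun k _ => ha_cont k
  have hA_int : ∀ t ∈ Set.Icc rhat T, IntervalIntegrable A volume rhat t := by
    intro t ht
    refine (hA_cont.mono ?_).intervalIntegrable
    rw [Set.uIcc_of_le ht.1]
    exact Set.Icc_subset_Icc le_rfl ht.2
  have hBsum : ∀ t ∈ Set.Icc rhat T, (∑ k, ∫ s in rhat..t, a k s) = B t := by
    intro t ht
    simp only [hB]
    refine (intervalIntegral.integral_finset_sum fun k _ => ?_).symm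
    refine ((ha_cont k).mono ?_).intervalIntegrable
    rw [Set.uIcc_of_le ht.1]
    exact Set.Icc_subset_Icc le_rfl ht.2
  have hA0 : ∀ t ∈ Set.Icc rhat T, 0 ≤ A t := fun t ht =>
    Finset.sum_nonneg fun k _ => ha0 k t ht
  have hB0 : ∀ t ∈ Set.Icc rhat T, 0 ≤ B t := by
    intro t ht
    refine intervalIntegral.integral_nonneg ht.1 fun s hs => ?_
    exact hA0 s ⟨hs.1, hs.2.trans ht.2⟩
  set M : ℝ := ∑ k, c k t0 with hM
  have hM0 : 0 ≤ M := Finset.sum_nonneg fun k _ => hc0 k t0 ht0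
  set δ : ℝ := C * ε ^ m * M with hδ
  set K : ℝ := C * d * ε with hK
  have hδ0 : 0 ≤ δ := by positivity
  have hK0 : 0 < K := by positivity
  have hsub : Set.Icc rhat t0 ⊆ Set.Icc rhat T := Set.Icc_subset_Icc le_rfl ht0.2
  -- A ≤ K B + δ on [rhat, t0]
  have hbound : ∀ t ∈ Set.Icc rhat t0, A t ≤ K * B t + δ := by
    intro t ht
    have htT : t ∈ Set.Icc rhat T := hsub ht
    have hsumc : (∑ k, c k t) ≤ M :=
      Finset.sum_le_sum fun k _ => hc_mono k htT ht0 ht.2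
    calc A t ≤ ∑ k, C * (ε ^ m * c k t + ε * ∑ j, ∫ s in rhat..t, a j s) :=
          Finset.sum_le_sum fun k _ => hineq k t htT
      _ = C * ε ^ m * (∑ k, c k t) + K * B t := by
          rw [hBsum t htT]
          simp only [mul_add, Finset.sum_add_distrib, ← Finset.mul_sum, Finset.sum_const,
            Finset.card_univ, Fintype.card_fin, nsmul_eq_mul, hK]
          ring
      _ ≤ K * B t + δ := by
          have : C * ε ^ m * (∑ k, c k t) ≤ δ := by
            rw [hδ]
            exact mul_le_mul_of_nonneg_left hsumc (by positivity)
          linarith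
  -- B is continuous on [rhat, t0]
  have hB_cont : ContinuousOn B (Set.Icc rhat t0) := by
    have := intervalIntegral.continuousOn_primitive_interval'
      (hA_int t0 ht0) (Set.left_mem_uIcc)
    rwa [Set.uIcc_of_le ht0.1] at this
  -- B has right derivative A t on [rhat, t0)
  have hB_deriv : ∀ t ∈ Set.Ico rhat t0, HasDerivWithinAt B (A t) (Set.Ici t) t := by
    intro t ht
    have htT : t ∈ Set.Icc rhat T := ⟨ht.1, ht.2.le.trans ht0.2⟩
    have hmemIcc : Set.Icc rhat T ∈ nhdsWithin t (Set.Ioi t) := by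
      refine nhdsWithin_mono t Set.Ioi_subset_Ici_self ?_
      exact Filter.mem_of_superset
        (Icc_mem_nhdsGE_of_mem ⟨le_rfl, lt_of_lt_of_le ht.2 ht0.2⟩)
        (Set.Icc_subset_Icc htT.1 le_rfl)
    exact intervalIntegral.integral_hasDerivWithinAt_right (hA_int t htT)
      ⟨Set.Icc rhat T, hmemIcc, hA_cont.aestronglyMeasurable measurableSet_Icc⟩
      ((hA_cont.continuousWithinAt htT).mono_of_mem_nhdsWithin hmemIcc)
  -- Gronwall
  have hgron := norm_le_gronwallBound_of_norm_deriv_right_le (f := B) (f' := A)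
    (δ := 0) (K := K) (ε := δ) hB_cont hB_deriv
    (by simp [hB, Real.norm_eq_abs])
    (fun t ht => by
      have htT : t ∈ Set.Icc rhat T := ⟨ht.1, ht.2.le.trans ht0.2⟩
      have h1 := hbound t ⟨ht.1, ht.2.le⟩
      rw [Real.norm_eq_abs, Real.norm_eq_abs, abs_of_nonneg (hA0 t htT),
        abs_of_nonneg (hB0 t htT)]
      exact h1)
  have hBt0 := hgron t0 ⟨ht0.1, le_rfl⟩
  rw [Real.norm_eq_abs, abs_of_nonneg (hB0 t0 ht0)] at hBt0
  rw [gronwallBound_of_K_ne_0 hK0.ne'] at hBt0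
  simp only [zero_mul, zero_add] at hBt0
  -- estimate the exponential
  have hexp : Real.exp (K * (t0 - rhat)) ≤ Real.exp (C * d) := by
    refine Real.exp_le_exp.2 ?_
    have h1 : K * (t0 - rhat) ≤ C * d * (ε * T) := by
      rw [hK]
      have : t0 - rhat ≤ T := by linarith [ht0.2, hr]
      nlinarith [hε.le, ht0.1, ht0.2, hr]
    calc K * (t0 - rhat) ≤ C * d * (ε * T) := h1
      _ ≤ C * d * 1 := by
          refine mul_le_mul_of_nonneg_left hεT (by positivity)
      _ = C * d := mul_one _
  have hBfinal : B t0 ≤ δ / K * (Real.exp (C * d) - 1) := by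
    refine hBt0.trans ?_
    refine mul_le_mul_of_nonneg_left (by linarith) (by positivity)
  -- conclude
  have hfin := hineq i t0 ht0
  rw [hBsum t0 ht0] at hfin
  have hterm : C * ε * B t0 ≤ δ * (Real.exp (C * d) - 1) := by
    have h2 : C * ε * (δ / K * (Real.exp (C * d) - 1)) = δ / d * (Real.exp (C * d) - 1) := by
      rw [hK]; field_simp
    have hδd : δ / d * (Real.exp (C * d) - 1) ≤ δ * (Real.exp (C * d) - 1) := by
      have he1 : (0:ℝ) ≤ Real.exp (C * d) - 1 := by
        have := Real.one_le_exp (by positivity : (0:ℝ) ≤ C * d); linarith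
      have : δ / d ≤ δ := by
        rw [div_le_iff₀ (by positivity)]
        nlinarith
      exact mul_le_mul_of_nonneg_right this he1
    calc C * ε * B t0 ≤ C * ε * (δ / K * (Real.exp (C * d) - 1)) :=
          mul_le_mul_of_nonneg_left hBfinal (by positivity)
      _ = δ / d * (Real.exp (C * d) - 1) := h2
      _ ≤ δ * (Real.exp (C * d) - 1) := hδd
  have hci : C * (ε ^ m * c i t0) ≤ δ := by
    rw [hδ]
    have : c i t0 ≤ M := by
      rw [hM]
      exact Finset.single_le_sum (fun k _ => hc0 k t0 ht0) (Finset.mem_univ i)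
    calc C * (ε ^ m * c i t0) = C * ε ^ m * c i t0 := by ring
      _ ≤ C * ε ^ m * M := mul_le_mul_of_nonneg_left this (by positivity)
  have : a i t0 ≤ δ * Real.exp (C * d) := by
    have := hfin
    nlinarith [hterm, hci]
  calc a i t0 ≤ δ * Real.exp (C * d) := this
    _ = C * Real.exp (C * d) * ε ^ m * M := by rw [hδ]; ring
end

section
/- Let ρ > 1, α ∈ (0,1] with αρ ≤ 1, and let c, c₁, c₂ > 0 and ϰ, ϰ′ > 0. Let 𝒰 and 𝒩 be independent centered Gaussian random variables with variances c₁ and c₂, respectively. Then there is δ′ > 0 such that, as ε → 0⁺, sup over x ∈ K_ϰ(ε) and intervals [a,b] ⊆ K_{ϰ′}(ε) of | P( c|x|^ρ + ε^{1−αρ} 𝒩 ∈ [a,b] and x + ε^{1−α} 𝒰 ≥ 0 ) − P( c|x + ε^{1−α} 𝒰|^ρ + ε^{1−αρ} 𝒩 ∈ [a,b] and x + ε^{1−α} 𝒰 ≥ 0 ) | is o(ε^{δ′}). -/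
/-!
The two events differ only through `c|x|^ρ` versus `c|x + ε^{1-α}𝒰|^ρ`. Since `|·|^ρ` is
Lipschitz on bounded sets (by convexity), off the event `|𝒰| ≥ l_ε` these differ by at most
`D = cρ(l_ε^ϰ + l_ε)^{ρ-1} l_ε ε^{1-α}`, so the events can disagree only when
`c|x|^ρ + ε^{1-αρ}𝒩` lies within `D` of `a` or `b`. As the density of `𝒩` is bounded, this has
probability `O(D ε^{αρ-1})`, a power of `l_ε` times `ε^{α(ρ-1)}`, while the sub-Gaussian tail
bound gives `P(|𝒰| ≥ l_ε) ≤ 2 exp(-l_ε²/(2c₁))`, smaller than every power of `ε`.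
Any `δ′ < α(ρ-1)` works; we take `δ′ = α(ρ-1)/2`.
-/

open MeasureTheory

open Real Set Filter Topology Asymptotics ProbabilityTheory
open scoped NNReal

lemma rpow_sub_rpow_le_mul_sub {ρ p q : ℝ} (hρ : 1 ≤ ρ) (hq : 0 ≤ q) (hqp : q ≤ p) :
    p ^ ρ - q ^ ρ ≤ ρ * p ^ (ρ - 1) * (p - q) := by
  rcases hqp.eq_or_lt with rfl | hlt
  · simp
  have h := (convexOn_rpow hρ).slope_le_of_hasDerivAt hq (hq.trans hlt.le) hlt
    (hasDerivAt_rpow_const (Or.inr hρ))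
  rwa [slope_def_field, div_le_iff₀ (sub_pos.2 hlt)] at h

lemma abs_rpow_sub_abs_rpow_le {ρ R p q : ℝ} (hρ : 1 ≤ ρ) (hp : |p| ≤ R) :
    |p| ^ ρ - |q| ^ ρ ≤ ρ * R ^ (ρ - 1) * |p - q| := by
  have hR : 0 ≤ R := (abs_nonneg p).trans hp
  rcases le_total |q| |p| with hqp | hpq
  · calc |p| ^ ρ - |q| ^ ρ ≤ ρ * |p| ^ (ρ - 1) * (|p| - |q|) :=
          rpow_sub_rpow_le_mul_sub hρ (abs_nonneg q) hqp
      _ ≤ ρ * R ^ (ρ - 1) * |p - q| := by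
          gcongr ρ * ?_ * ?_
          · exact rpow_le_rpow (abs_nonneg p) hp (by linarith)
          · exact abs_sub_abs_le_abs_sub p q
  · have : |p| ^ ρ ≤ |q| ^ ρ := by gcongr
    have : 0 ≤ ρ * R ^ (ρ - 1) * |p - q| := by positivity
    linarith

lemma abs_abs_rpow_sub_abs_rpow_le {ρ R p q : ℝ} (hρ : 1 ≤ ρ) (hp : |p| ≤ R) (hq : |q| ≤ R) :
    |(|p| ^ ρ - |q| ^ ρ)| ≤ ρ * R ^ (ρ - 1) * |p - q| := by
  rw [abs_sub_le_iff]
  exact ⟨abs_rpow_sub_abs_rpow_le hρ hp, abs_sub_comm p q ▸ abs_rpow_sub_abs_rpow_le hρ hq⟩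

lemma abs_mul_abs_add_rpow_sub_le {ρ c x u η X L : ℝ} (hρ : 1 ≤ ρ) (hc : 0 ≤ c)
    (hx : |x| ≤ X) (hu : |u| ≤ L) (hη0 : 0 ≤ η) (hη1 : η ≤ 1) :
    |c * |x + η * u| ^ ρ - c * |x| ^ ρ| ≤ c * ρ * (X + L) ^ (ρ - 1) * (η * L) := by
  have hηu : |η * u| ≤ η * L := by
    rw [abs_mul, abs_of_nonneg hη0]; exact mul_le_mul_of_nonneg_left hu hη0
  have hL : η * L ≤ L := mul_le_of_le_one_left ((abs_nonneg u).trans hu) hη1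
  have hxu : |x + η * u| ≤ X + L := (abs_add_le _ _).trans (by linarith)
  have hx' : |x| ≤ X + L := by linarith [(abs_nonneg u).trans hu]
  calc |c * |x + η * u| ^ ρ - c * |x| ^ ρ| = c * |(|x + η * u| ^ ρ - |x| ^ ρ)| := by
        rw [← mul_sub, abs_mul, abs_of_nonneg hc]
    _ ≤ c * (ρ * (X + L) ^ (ρ - 1) * |x + η * u - x|) := by
        gcongr; exact abs_abs_rpow_sub_abs_rpow_le hρ hxu hx'
    _ ≤ c * (ρ * (X + L) ^ (ρ - 1) * (η * L)) := by
        have : 0 ≤ ρ * (X + L) ^ (ρ - 1) :=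
          mul_nonneg (by linarith) (rpow_nonneg ((abs_nonneg x).trans hx') _)
        rw [add_sub_cancel_left]
        gcongr
    _ = c * ρ * (X + L) ^ (ρ - 1) * (η * L) := by ring

lemma hasSubgaussianMGF_of_map_eq_gaussianReal {Ω : Type*} [MeasurableSpace Ω] {P : Measure Ω}
    {X : Ω → ℝ} {v : ℝ≥0} (hX : AEMeasurable X P) (hlaw : P.map X = gaussianReal 0 v) :
    HasSubgaussianMGF X v P := by
  rw [← HasSubgaussianMGF.id_map_iff hX, hlaw]
  refine ⟨integrable_exp_mul_gaussianReal, fun t => ?_⟩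
  simp [mgf_id_gaussianReal]

lemma ProbabilityTheory.HasSubgaussianMGF.measureReal_abs_ge_le {Ω : Type*} [MeasurableSpace Ω]
    {P : Measure Ω} [IsFiniteMeasure P] {X : Ω → ℝ} {v : ℝ≥0} (h : HasSubgaussianMGF X v P)
    {L : ℝ} (hL : 0 ≤ L) :
    P.real {ω | L ≤ |X ω|} ≤ 2 * exp (-L ^ 2 / (2 * v)) := by
  have hsplit : {ω | L ≤ |X ω|} ⊆ {ω | L ≤ X ω} ∪ {ω | L ≤ (-X) ω} := fun ω (hω : L ≤ |X ω|) => by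
    rcases le_abs'.1 hω with h | h
    · exact Or.inr (by simp only [mem_ofPred_eq, Pi.neg_apply]; linarith)
    · exact Or.inl h
  calc P.real {ω | L ≤ |X ω|} ≤ P.real {ω | L ≤ X ω} + P.real {ω | L ≤ (-X) ω} :=
        (measureReal_mono hsplit).trans (measureReal_union_le _ _)
    _ ≤ 2 * exp (-L ^ 2 / (2 * v)) := by
        linarith [h.measure_ge_le hL, h.neg.measure_ge_le hL]

lemma gaussianPDFReal_le_inv_sqrt (μ : ℝ) (v : ℝ≥0) (x : ℝ) :
    gaussianPDFReal μ v x ≤ (√(2 * π * v))⁻¹ := by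
  rw [gaussianPDFReal]
  refine mul_le_of_le_one_right (by positivity) (exp_le_one_iff.2 ?_)
  exact div_nonpos_of_nonpos_of_nonneg (neg_nonpos.2 (sq_nonneg _)) (by positivity)

lemma gaussianReal_le_mul_volume (μ : ℝ) {v : ℝ≥0} (hv : v ≠ 0) (s : Set ℝ) :
    gaussianReal μ v s ≤ ENNReal.ofReal (√(2 * π * v))⁻¹ * volume s := by
  rw [gaussianReal_apply μ hv, ← setLIntegral_const]
  exact lintegral_mono fun x => ENNReal.ofReal_le_ofReal (gaussianPDFReal_le_inv_sqrt μ v x)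

lemma measureReal_abs_add_mul_sub_le {Ω : Type*} [MeasurableSpace Ω] {P : Measure Ω}
    {N : Ω → ℝ} {μ : ℝ} {v : ℝ≥0} (hN : Measurable N) (hlaw : P.map N = gaussianReal μ v)
    (hv : v ≠ 0) {κ : ℝ} (hκ : 0 < κ) (y a : ℝ) {r : ℝ} (hr : 0 ≤ r) :
    P.real {ω | |y + κ * N ω - a| ≤ r} ≤ 2 * (r / κ) * (√(2 * π * v))⁻¹ := by
  have hset : {ω | |y + κ * N ω - a| ≤ r} = N ⁻¹' Metric.closedBall ((a - y) / κ) (r / κ) := by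
    ext ω
    rw [mem_preimage, Metric.mem_closedBall, Real.dist_eq, le_div_iff₀ hκ, mem_ofPred_eq,
      ← abs_of_pos hκ, ← abs_mul, abs_of_pos hκ]
    congr! 2
    field_simp
    ring
  rw [hset, measureReal_def, ← Measure.map_apply hN measurableSet_closedBall, hlaw]
  refine ENNReal.toReal_le_of_le_ofReal (by positivity) ?_
  calc gaussianReal μ v (Metric.closedBall ((a - y) / κ) (r / κ))
      ≤ ENNReal.ofReal (√(2 * π * v))⁻¹ * ENNReal.ofReal (2 * (r / κ)) := by
        rw [← Real.volume_closedBall]; exact gaussianReal_le_mul_volume μ hv _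
    _ = ENNReal.ofReal (2 * (r / κ) * (√(2 * π * v))⁻¹) := by
        rw [← ENNReal.ofReal_mul (by positivity), mul_comm]

lemma abs_measureReal_sub_le_of_subset_union {Ω : Type*} [MeasurableSpace Ω] {P : Measure Ω}
    [IsFiniteMeasure P] {s t u : Set Ω} (hst : s ⊆ t ∪ u) (hts : t ⊆ s ∪ u) :
    |P.real s - P.real t| ≤ P.real u := by
  rw [abs_sub_le_iff]
  constructor
  · linarith [measureReal_mono (μ := P) hst, measureReal_union_le (μ := P) t u]
  · linarith [measureReal_mono (μ := P) hts, measureReal_union_le (μ := P) s u]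

lemma mem_Icc_iff_of_abs_sub_le {a b y z D : ℝ} (hz : |z - y| ≤ D) (ha : D < |y - a|)
    (hb : D < |y - b|) : y ∈ Icc a b ↔ z ∈ Icc a b := by
  rw [abs_le] at hz
  rw [lt_abs] at ha hb
  simp only [mem_Icc]
  constructor <;> rintro ⟨h₁, h₂⟩ <;> constructor <;> rcases ha with ha | ha <;>
    rcases hb with hb | hb <;> linarith

lemma abs_measureReal_mem_Icc_sub_le {Ω : Type*} [MeasurableSpace Ω] {P : Measure Ω}
    [IsFiniteMeasure P] {Y Z : Ω → ℝ} {E : Ω → Prop} {G : Set Ω} {D : ℝ}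
    (hYZ : ∀ ω ∉ G, |Z ω - Y ω| ≤ D) (a b : ℝ) :
    |P.real {ω | Y ω ∈ Icc a b ∧ E ω} - P.real {ω | Z ω ∈ Icc a b ∧ E ω}| ≤
      P.real G + P.real {ω | |Y ω - a| ≤ D} + P.real {ω | |Y ω - b| ≤ D} := by
  set B := G ∪ {ω | |Y ω - a| ≤ D} ∪ {ω | |Y ω - b| ≤ D}
  have hgood : ∀ ω ∉ B, (Y ω ∈ Icc a b ↔ Z ω ∈ Icc a b) := fun ω hω => by
    simp only [B, mem_union, mem_ofPred_eq, not_or, not_le] at hω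
    exact mem_Icc_iff_of_abs_sub_le (hYZ ω hω.1.1) hω.1.2 hω.2
  calc _ ≤ P.real B := by
        refine abs_measureReal_sub_le_of_subset_union (fun ω hω => ?_) (fun ω hω => ?_)
        · by_cases hbad : ω ∈ B
          exacts [Or.inr hbad, Or.inl ⟨(hgood ω hbad).1 hω.1, hω.2⟩]
        · by_cases hbad : ω ∈ B
          exacts [Or.inr hbad, Or.inl ⟨(hgood ω hbad).2 hω.1, hω.2⟩]
    _ ≤ _ := by
        linarith [measureReal_union_le (μ := P) (G ∪ {ω | |Y ω - a| ≤ D}) {ω | |Y ω - b| ≤ D},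
          measureReal_union_le (μ := P) G {ω | |Y ω - a| ≤ D}]

lemma isLittleO_exp_neg_sq_div_exp_mul {v : ℝ} (hv : 0 < v) (b : ℝ) :
    (fun t => exp (-t ^ 2 / (2 * v))) =o[atTop] fun t => exp (b * t) := by
  rw [isLittleO_exp_comp_exp_comp]
  have h : Tendsto (fun t => t * (t / (2 * v) + b)) atTop atTop :=
    tendsto_id.atTop_mul_atTop₀ (tendsto_atTop_add_const_right _ b
      (tendsto_id.atTop_div_const (by positivity)))
  refine h.congr fun t => ?_
  ring

lemma isLittleO_add_rpow_mul_exp (ϰ : ℝ) {p δ : ℝ} (hp : 0 ≤ p) (hδ : 0 < δ) :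
    (fun t => (t ^ ϰ + t) ^ p * t) =o[atTop] fun t => exp (δ * t) := by
  set m := max ϰ 1
  refine IsBigO.trans_isLittleO ?_ (isLittleO_rpow_exp_pos_mul_atTop (m * p + 1) hδ)
  refine IsBigO.of_bound (2 ^ p) ?_
  filter_upwards [eventually_ge_atTop 1] with t ht
  have ht0 : 0 ≤ t := by linarith
  have hsum : t ^ ϰ + t ≤ 2 * t ^ m := by
    have h₁ : t ^ ϰ ≤ t ^ m := rpow_le_rpow_of_exponent_le ht (le_max_left _ _)
    have h₂ : t ≤ t ^ m := by
      simpa using rpow_le_rpow_of_exponent_le ht (le_max_right ϰ 1)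
    linarith
  rw [norm_of_nonneg (by positivity), norm_of_nonneg (by positivity)]
  calc (t ^ ϰ + t) ^ p * t ≤ (2 * t ^ m) ^ p * t := by gcongr
    _ = 2 ^ p * t ^ (m * p + 1) := by
        rw [mul_rpow (by norm_num) (by positivity), ← rpow_mul ht0,
          rpow_add_one' ht0 (by positivity)]
        ring

/-- At `t = l_ε`: the tail `P(|𝒰| ≥ t)` plus the `𝒩`-mass of the two strips of half-width `D/κ`
around `a` and `b`, where `D/κ = cρ(t^ϰ + t)^{ρ-1} t ε^{α(ρ-1)}` and `ε^{α(ρ-1)} = exp(-α(ρ-1)t)`. -/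
noncomputable def errorBound (ρ α c : ℝ) (c₁ c₂ : ℝ≥0) (ϰ t : ℝ) : ℝ :=
  2 * exp (-t ^ 2 / (2 * c₁)) +
    4 * c * ρ * (√(2 * π * c₂))⁻¹ * ((t ^ ϰ + t) ^ (ρ - 1) * t * exp (-(α * (ρ - 1)) * t))

lemma isLittleO_errorBound {ρ α : ℝ} (c : ℝ) {c₁ : ℝ≥0} (c₂ : ℝ≥0) (ϰ : ℝ) (hρ : 1 < ρ)
    (hα : 0 < α) (hc₁ : 0 < c₁) :
    errorBound ρ α c c₁ c₂ ϰ =o[atTop] fun t => exp (-(α * (ρ - 1) / 2) * t) := by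
  have hδ : 0 < α * (ρ - 1) / 2 := by have := sub_pos.2 hρ; positivity
  have hpoly : (fun t => (t ^ ϰ + t) ^ (ρ - 1) * t * exp (-(α * (ρ - 1)) * t)) =o[atTop]
      fun t => exp (-(α * (ρ - 1) / 2) * t) := by
    refine ((isLittleO_add_rpow_mul_exp ϰ (sub_pos.2 hρ).le hδ).mul_isBigO
      (isBigO_refl (fun t => exp (-(α * (ρ - 1)) * t)) atTop)).congr_right fun t => ?_
    rw [← exp_add]
    ring_nf
  exact ((isLittleO_exp_neg_sq_div_exp_mul (NNReal.coe_pos.2 hc₁) _).const_mul_left 2).add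
    (hpoly.const_mul_left _)

lemma tendsto_lE_nhdsGT_zero : Tendsto lE (𝓝[>] 0) atTop :=
  (tendsto_neg_atBot_atTop.comp tendsto_log_nhdsGT_zero).congr fun ε => by
    simp [lE, log_inv]

lemma exp_neg_mul_lE {ε : ℝ} (hε : 0 < ε) (s : ℝ) : exp (-s * lE ε) = ε ^ s := by
  rw [rpow_def_of_pos hε, lE, one_div, log_inv]
  ring_nf

lemma abs_measureReal_sub_le_errorBound {Ω : Type*} [MeasurableSpace Ω] {P : Measure Ω}
    [IsProbabilityMeasure P] {ρ α c : ℝ} {c₁ c₂ : ℝ≥0} {ϰ : ℝ} (hρ : 1 ≤ ρ) (hα : α ≤ 1)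
    (hc : 0 ≤ c) (hc₂ : c₂ ≠ 0) {U N : Ω → ℝ} (hU : Measurable U) (hN : Measurable N)
    (hUlaw : P.map U = gaussianReal 0 c₁) (hNlaw : P.map N = gaussianReal 0 c₂)
    {ε : ℝ} (hε0 : 0 < ε) (hε1 : ε ≤ 1) {x : ℝ} (hx : x ∈ Kset ϰ ε) (a b : ℝ) :
    |P.real {ω | c * |x| ^ ρ + ε ^ (1 - α * ρ) * N ω ∈ Icc a b ∧ 0 ≤ x + ε ^ (1 - α) * U ω} -
      P.real {ω | c * |x + ε ^ (1 - α) * U ω| ^ ρ + ε ^ (1 - α * ρ) * N ω ∈ Icc a b ∧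
        0 ≤ x + ε ^ (1 - α) * U ω}| ≤ errorBound ρ α c c₁ c₂ ϰ (lE ε) := by
  set l := lE ε
  set η := ε ^ (1 - α)
  set κ := ε ^ (1 - α * ρ)
  have hl : 0 ≤ l := log_nonneg (one_le_one_div hε0 hε1)
  set D := c * ρ * (l ^ ϰ + l) ^ (ρ - 1) * (η * l)
  have hD : 0 ≤ D := by positivity
  have hpert : ∀ ω ∉ {ω | l ≤ |U ω|},
      |(c * |x + η * U ω| ^ ρ + κ * N ω) - (c * |x| ^ ρ + κ * N ω)| ≤ D := fun ω hω => by
    rw [add_sub_add_right_eq_sub]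
    exact abs_mul_abs_add_rpow_sub_le hρ hc (abs_le.2 hx) (not_le.1 hω).le
      (rpow_nonneg hε0.le _) (rpow_le_one hε0.le hε1 (by linarith))
  have htail := HasSubgaussianMGF.measureReal_abs_ge_le
    (hasSubgaussianMGF_of_map_eq_gaussianReal hU.aemeasurable hUlaw) hl
  have hstrip (y : ℝ) := measureReal_abs_add_mul_sub_le hN hNlaw hc₂
    (rpow_pos_of_pos hε0 (1 - α * ρ)) (c * |x| ^ ρ) y hD
  have hDκ : D / κ = c * ρ * ((l ^ ϰ + l) ^ (ρ - 1) * l * exp (-(α * (ρ - 1)) * l)) := by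
    have hηκ : η / κ = ε ^ (α * (ρ - 1)) := by
      rw [← rpow_sub hε0]
      ring_nf
    rw [exp_neg_mul_lE hε0, ← hηκ]
    ring
  calc _ ≤ _ := abs_measureReal_mem_Icc_sub_le hpert a b
    _ ≤ 2 * exp (-l ^ 2 / (2 * c₁)) + 2 * (D / κ) * (√(2 * π * c₂))⁻¹ +
          2 * (D / κ) * (√(2 * π * c₂))⁻¹ := add_le_add (add_le_add htail (hstrip a)) (hstrip b)
    _ = errorBound ρ α c c₁ c₂ ϰ l := by
        rw [errorBound, hDκ]
        ring

theorem stmt16_general {Ω : Type*} [MeasurableSpace Ω] (P : Measure Ω) [IsProbabilityMeasure P]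
    (ρ α c : ℝ) (c₁ c₂ : NNReal) (ϰ ϰ' : ℝ)
    (hρ : 1 < ρ) (hα0 : 0 < α) (hα1 : α ≤ 1)
    (hc : 0 < c) (hc₁ : 0 < c₁) (hc₂ : 0 < c₂)
    (U N : Ω → ℝ) (hU : Measurable U) (hN : Measurable N)
    (hUlaw : P.map U = ProbabilityTheory.gaussianReal 0 c₁)
    (hNlaw : P.map N = ProbabilityTheory.gaussianReal 0 c₂) :
    ∃ δ : ℝ, 0 < δ ∧ ∀ C : ℝ, 0 < C → ∃ ε₀ : ℝ, 0 < ε₀ ∧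
      ∀ ε : ℝ, 0 < ε → ε < ε₀ →
      ∀ x ∈ Kset ϰ ε, ∀ a b : ℝ, a ≤ b → Set.Icc a b ⊆ Kset ϰ' ε →
        |(P {ω | c * |x| ^ ρ + ε ^ (1 - α * ρ) * N ω ∈ Set.Icc a b ∧
              0 ≤ x + ε ^ (1 - α) * U ω}).toReal -
          (P {ω | c * |x + ε ^ (1 - α) * U ω| ^ ρ + ε ^ (1 - α * ρ) * N ω ∈ Set.Icc a b ∧
              0 ≤ x + ε ^ (1 - α) * U ω}).toReal| ≤ C * ε ^ δ := by
  set δ := α * (ρ - 1) / 2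
  have hδ : 0 < δ := by have := sub_pos.2 hρ; positivity
  have hlittle : (fun ε => errorBound ρ α c c₁ c₂ ϰ (lE ε)) =o[𝓝[>] 0] fun ε => ε ^ δ :=
    ((isLittleO_errorBound c c₂ ϰ hρ hα0 hc₁).comp_tendsto tendsto_lE_nhdsGT_zero).congr'
      EventuallyEq.rfl (eventually_mem_nhdsWithin.mono fun ε hε => exp_neg_mul_lE hε δ)
  refine ⟨δ, hδ, fun C hC => ?_⟩
  obtain ⟨ε₀, hε₀, hsmall⟩ :=
    mem_nhdsGT_iff_exists_Ioo_subset.1 ((hlittle.bound hC).and (Ioo_mem_nhdsGT one_pos))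
  refine ⟨ε₀, hε₀, fun ε hε hεε₀ x hx a b _ _ => ?_⟩
  obtain ⟨hbound, -, hε1⟩ := hsmall ⟨hε, hεε₀⟩
  calc _ ≤ errorBound ρ α c c₁ c₂ ϰ (lE ε) :=
        abs_measureReal_sub_le_errorBound hρ.le hα1 hc.le hc₂.ne' hU hN hUlaw hNlaw hε hε1.le
          hx a b
    _ ≤ C * ε ^ δ := by
        rw [norm_of_nonneg (rpow_nonneg hε.le δ)] at hbound
        exact (le_abs_self _).trans hbound

theorem stmt16 {Ω : Type*} [MeasurableSpace Ω] (P : Measure Ω) [IsProbabilityMeasure P]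
    (ρ α c : ℝ) (c₁ c₂ : NNReal) (ϰ ϰ' : ℝ)
    (hρ : 1 < ρ) (hα0 : 0 < α) (hα1 : α ≤ 1) (hαρ : α * ρ ≤ 1)
    (hc : 0 < c) (hc₁ : 0 < c₁) (hc₂ : 0 < c₂) (hϰ : 0 < ϰ) (hϰ' : 0 < ϰ')
    (U N : Ω → ℝ) (hU : Measurable U) (hN : Measurable N)
    (hind : ProbabilityTheory.IndepFun U N P)
    (hUlaw : P.map U = ProbabilityTheory.gaussianReal 0 c₁)
    (hNlaw : P.map N = ProbabilityTheory.gaussianReal 0 c₂) :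
    ∃ δ : ℝ, 0 < δ ∧ ∀ C : ℝ, 0 < C → ∃ ε₀ : ℝ, 0 < ε₀ ∧
      ∀ ε : ℝ, 0 < ε → ε < ε₀ →
      ∀ x ∈ Kset ϰ ε, ∀ a b : ℝ, a ≤ b → Set.Icc a b ⊆ Kset ϰ' ε →
        |(P {ω | c * |x| ^ ρ + ε ^ (1 - α * ρ) * N ω ∈ Set.Icc a b ∧
              0 ≤ x + ε ^ (1 - α) * U ω}).toReal -
          (P {ω | c * |x + ε ^ (1 - α) * U ω| ^ ρ + ε ^ (1 - α * ρ) * N ω ∈ Set.Icc a b ∧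
              0 ≤ x + ε ^ (1 - α) * U ω}).toReal| ≤ C * ε ^ δ :=
  stmt16_general P ρ α c c₁ c₂ ϰ ϰ' hρ hα0 hα1 hc hc₁ hc₂ U N hU hN hUlaw hNlaw
end

section
/- Let m ∈ ℕ and let N be an ℝ^m-valued random vector whose law is absolutely continuous with respect to Lebesgue measure. Let (ξ_ε)_{ε∈(0,1)} be real-valued random variables, each independent of N, converging in distribution as ε → 0⁺ to a random variable ξ₀. Let (Φ_ε)_{ε∈(0,1)} be continuous functions ℝ × ℝ^m → ℝ converging locally uniformly, as ε → 0⁺, to a continuous function Φ such that for law(ξ₀)-almost every x ∈ ℝ the set {y ∈ ℝ^m : Φ(x,y) = 0} has Lebesgue measure zero. Then for every δ′ > 0, lim_{ε→0⁺} P( |Φ_ε(ξ_ε, N)| ≤ ε^{δ′} ) = 0. -/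
/-
By independence the law of `(ξ ε, N)` is `law(ξ ε) ⊗ law(N)`, which converges weakly to
`law(ξ₀) ⊗ law(N)`; this limit does not charge the zero set of `Φ₀`, by Fubini. Exhaust the
space by compacts `K n`: on `K n` the functions `Φ ε` are uniformly within `1/(2(n+1))` of `Φ₀`
for small `ε`, so the event `|Φ ε| ≤ ε ^ δ` lies in the closed set
`{|Φ₀| ≤ 1/(n+1)} ∪ (interior (K n))ᶜ`. The portmanteau theorem bounds the limsup of its
probability by the limit measure of that set, and these sets decrease to a subset of `{Φ₀ = 0}`.
-/

open MeasureTheory Filter Set Topology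

theorem TendstoLocallyUniformly.comp_tendsto {α β ι γ : Type*} [TopologicalSpace α]
    [UniformSpace β] {F : ι → α → β} {f : α → β} {p : Filter ι}
    (h : TendstoLocallyUniformly F f p) {g : γ → ι} {p' : Filter γ} (hg : Tendsto g p' p) :
    TendstoLocallyUniformly (fun i => F (g i)) f p' := fun u hu x =>
  let ⟨s, hs, hF⟩ := h u hu x
  ⟨s, hs, hg.eventually hF⟩

section SmallValues

variable {E ι : Type*} {L : Filter ι} {F : ι → E → ℝ} {f : E → ℝ} {t : ι → ℝ}

theorem TendstoUniformlyOn.eventually_abs_le_subset {K : Set E} (hF : TendstoUniformlyOn F f L K)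
    (ht : Tendsto t L (𝓝 0)) {r : ℝ} (hr : 0 < r) :
    ∀ᶠ i in L, {x | |F i x| ≤ t i} ⊆ {x | |f x| ≤ r} ∪ Kᶜ := by
  filter_upwards [Metric.tendstoUniformlyOn_iff.1 hF (r / 2) (half_pos hr),
    ht.eventually (gt_mem_nhds (half_pos hr))] with i hFi hti x hx
  by_cases hxK : x ∈ K
  · left
    have hdist : |f x - F i x| < r / 2 := by simpa only [Real.dist_eq] using hFi x hxK
    have hx : |F i x| ≤ t i := hx
    show |f x| ≤ r
    linarith [abs_sub_abs_le_abs_sub (f x) (F i x)]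
  · exact Or.inr hxK

variable [TopologicalSpace E]

theorem iInter_abs_le_union_compl_interior_subset (K : CompactExhaustion E) :
    ⋂ n : ℕ, ({x | |f x| ≤ 1 / (n + 1)} ∪ (interior (K n))ᶜ) ⊆ {x | f x = 0} := by
  intro x hx
  obtain ⟨n₀, hn₀⟩ := K.exists_mem x
  have hsmall : ∀ᶠ n : ℕ in atTop, |f x| ≤ 1 / (n + 1) := by
    filter_upwards [eventually_gt_atTop n₀] with n hn
    exact ((mem_iInter.1 hx n).resolve_right (not_not.2 (K.subset_interior hn hn₀)))
  exact abs_eq_zero.1 (le_antisymm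
    (ge_of_tendsto tendsto_one_div_add_atTop_nhds_zero_nat hsmall) (abs_nonneg _))

theorem tendsto_measure_abs_le_of_tendstoLocallyUniformly [LocallyCompactSpace E]
    [SigmaCompactSpace E] [HasOuterApproxClosed E] [MeasurableSpace E] [OpensMeasurableSpace E]
    {μs : ι → ProbabilityMeasure E} {μ : ProbabilityMeasure E} (hμ : Tendsto μs L (𝓝 μ))
    (hf : Continuous f) (hF : TendstoLocallyUniformly F f L)
    (hnull : (μ : Measure E) {x | f x = 0} = 0) (ht : Tendsto t L (𝓝 0)) :
    Tendsto (fun i => (μs i : Measure E) {x | |F i x| ≤ t i}) L (𝓝 0) := by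
  let K := CompactExhaustion.choice E
  let D : ℕ → Set E := fun n => {x | |f x| ≤ 1 / (n + 1)} ∪ (interior (K n))ᶜ
  have hD_closed (n : ℕ) : IsClosed (D n) :=
    (isClosed_le hf.abs continuous_const).union isOpen_interior.isClosed_compl
  have hD_anti : Antitone D := fun n k hnk =>
    union_subset_union (ofPred_subset_ofPred.2 fun x hx => hx.trans (Nat.one_div_le_one_div hnk))
      (compl_subset_compl.2 (interior_mono (K.subset hnk)))
  have hlimsup (n : ℕ) :
      limsup (fun i => (μs i : Measure E) {x | |F i x| ≤ t i}) L ≤ (μ : Measure E) (D n) := by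
    refine (limsup_le_limsup ?_).trans
      (ProbabilityMeasure.limsup_measure_closed_le_of_tendsto hμ (hD_closed n))
    have hFK := tendstoLocallyUniformly_iff_forall_isCompact.1 hF _ (K.isCompact n)
    filter_upwards [hFK.eventually_abs_le_subset ht Nat.one_div_pos_of_nat] with i hi
    exact measure_mono
      (hi.trans (union_subset_union_right _ (compl_subset_compl.2 interior_subset)))
  have hD_lim : Tendsto (fun n => (μ : Measure E) (D n)) atTop (𝓝 0) := by
    have := tendsto_measure_iInter_atTop (μ := (μ : Measure E))
      (fun n => (hD_closed n).measurableSet.nullMeasurableSet) hD_anti ⟨0, measure_ne_top _ _⟩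
    rwa [measure_mono_null (iInter_abs_le_union_compl_interior_subset K) hnull] at this
  exact tendsto_of_le_liminf_of_limsup_le bot_le (ge_of_tendsto' hD_lim hlimsup)

end SmallValues

theorem ProbabilityMeasure.tendsto_map_of_forall_integral_tendsto {Ω E ι : Type*}
    [MeasurableSpace Ω] [TopologicalSpace E] [MeasurableSpace E] [OpensMeasurableSpace E]
    {P : ProbabilityMeasure Ω} {L : Filter ι} {X : ι → Ω → E} {X₀ : Ω → E}
    (hX : ∀ i, AEMeasurable (X i) P) (hX₀ : AEMeasurable X₀ P)
    (h : ∀ f : BoundedContinuousFunction E ℝ,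
      Tendsto (fun i => ∫ ω, f (X i ω) ∂P) L (𝓝 (∫ ω, f (X₀ ω) ∂P))) :
    Tendsto (fun i => P.map (hX i)) L (𝓝 (P.map hX₀)) := by
  refine ProbabilityMeasure.tendsto_iff_forall_integral_tendsto.2 fun f => ?_
  simp only [ProbabilityMeasure.toMeasure_map]
  rw [integral_map hX₀ f.continuous.aestronglyMeasurable]
  exact (h f).congr fun i => (integral_map (hX i) f.continuous.aestronglyMeasurable).symm

theorem stmt17 {Ω : Type*} [MeasurableSpace Ω] (P : Measure Ω) [IsProbabilityMeasure P]
    (m : ℕ) (N : Ω → (Fin m → ℝ)) (hN : Measurable N)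
    (hNac : P.map N ≪ (volume : Measure (Fin m → ℝ)))
    (ξ : ℝ → Ω → ℝ) (hξm : ∀ ε ∈ Set.Ioo (0:ℝ) 1, Measurable (ξ ε))
    (hξind : ∀ ε ∈ Set.Ioo (0:ℝ) 1, ProbabilityTheory.IndepFun (ξ ε) N P)
    (ξ₀ : Ω → ℝ) (hξ₀ : Measurable ξ₀)
    (hconv : ∀ f : BoundedContinuousFunction ℝ ℝ,
      Tendsto (fun ε => ∫ ω, f (ξ ε ω) ∂P) (nhdsWithin (0:ℝ) (Set.Ioi 0))
        (nhds (∫ ω, f (ξ₀ ω) ∂P)))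
    (Φ : ℝ → ℝ → (Fin m → ℝ) → ℝ) (Φ₀ : ℝ → (Fin m → ℝ) → ℝ)
    (hΦc : ∀ ε ∈ Set.Ioo (0:ℝ) 1, Continuous (fun q : ℝ × (Fin m → ℝ) => Φ ε q.1 q.2))
    (hΦ₀c : Continuous (fun q : ℝ × (Fin m → ℝ) => Φ₀ q.1 q.2))
    (hLU : TendstoLocallyUniformly (fun ε (q : ℝ × (Fin m → ℝ)) => Φ ε q.1 q.2)
      (fun q => Φ₀ q.1 q.2) (nhdsWithin (0:ℝ) (Set.Ioi 0)))
    (hzero : ∀ᵐ x ∂(P.map ξ₀), volume {y : Fin m → ℝ | Φ₀ x y = 0} = 0) :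
    ∀ δ : ℝ, 0 < δ →
      Tendsto (fun ε => P {ω | |Φ ε (ξ ε ω) (N ω)| ≤ ε ^ δ})
        (nhdsWithin (0:ℝ) (Set.Ioi 0)) (nhds 0) := by
  intro δ hδ
  -- `ξ ε` is only measurable for `ε ∈ (0, 1)`, so the laws are indexed by that interval.
  rw [← tendsto_comap'_iff (i := (Subtype.val : Ioo (0:ℝ) 1 → ℝ))
    (by simpa only [Subtype.range_coe] using Ioo_mem_nhdsGT one_pos)]
  let P' : ProbabilityMeasure Ω := ⟨P, inferInstance⟩
  let μ (ε : Ioo (0:ℝ) 1) : ProbabilityMeasure ℝ := P'.map (hξm ε ε.2).aemeasurable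
  let μ₀ : ProbabilityMeasure ℝ := P'.map hξ₀.aemeasurable
  let ν : ProbabilityMeasure (Fin m → ℝ) := P'.map hN.aemeasurable
  have hμ : Tendsto μ (comap Subtype.val (𝓝[>] 0)) (𝓝 μ₀) :=
    ProbabilityMeasure.tendsto_map_of_forall_integral_tendsto _ _
      fun f => (hconv f).comp tendsto_comap
  have hlaw (ε : Ioo (0:ℝ) 1) :
      P.map (fun ω => (ξ ε ω, N ω)) = ((μ ε).prod ν : Measure (ℝ × (Fin m → ℝ))) :=
    (ProbabilityTheory.indepFun_iff_map_prod_eq_prod_map_map (hξm ε ε.2).aemeasurable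
      hN.aemeasurable).1 (hξind ε ε.2)
  have hnull : ((μ₀.prod ν : ProbabilityMeasure _) : Measure (ℝ × (Fin m → ℝ)))
      {q | Φ₀ q.1 q.2 = 0} = 0 :=
    (Measure.measure_prod_null (isClosed_eq hΦ₀c continuous_const).measurableSet).2
      (hzero.mono fun x hx => hNac hx)
  have hpow : Tendsto (fun ε : ℝ => ε ^ δ) (𝓝[>] 0) (𝓝 0) := by
    simpa [Real.zero_rpow hδ.ne'] using
      (Real.continuousAt_rpow_const 0 δ (Or.inr hδ.le)).tendsto.mono_left nhdsWithin_le_nhds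
  refine (tendsto_measure_abs_le_of_tendstoLocallyUniformly
    ((ProbabilityMeasure.continuous_prod.tendsto _).comp (hμ.prodMk_nhds tendsto_const_nhds))
    hΦ₀c (hLU.comp_tendsto tendsto_comap) hnull (hpow.comp tendsto_comap)).congr fun ε => ?_
  change (((μ ε).prod ν : ProbabilityMeasure _) : Measure (ℝ × (Fin m → ℝ))) _ = P _
  rw [← hlaw, Measure.map_apply ((hξm ε ε.2).prodMk hN)
    (isClosed_le (hΦc ε ε.2).abs continuous_const).measurableSet]
  rfl
end

section
/- Let m ∈ ℕ and let N be an ℝ^m-valued random vector whose law is absolutely continuous with respect to Lebesgue measure and satisfies the tail bound P(|N|_∞ > r) ≤ C₀ e^{−r²/C₀} (r > 0) for some C₀ > 0. Let ς be a Borel measure on ℝ with ς((−∞, z]) ≤ C₀(1 + z^{C₀}) for all z ≥ 0. Let (Φ_ε)_{ε∈(0,1)} be continuous functions ℝ × ℝ^m → ℝ converging locally uniformly, as ε → 0⁺, to a continuous function Φ such that for every z ∈ ℝ the set {y ∈ ℝ^m : Φ(z,y) = 0} has Lebesgue measure zero. Assume moreover there are constants C, R, p, q > 0 such that |Φ_ε(z,y)|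 ≥ C|z|^p whenever ε ∈ (0,1), |z| ≥ R and |y|_∞ ≤ |z|^q. Then for every δ′ > 0, lim_{ε→0⁺} ∫_ℝ P( |Φ_ε(z, N)| ≤ ε^{δ′} ) ς(dz) = 0. -/
/-!
Dominated convergence in `z`. For fixed `z`, the law of `N` is tight and does not charge the zero
set of `Φ₀ z`; on a compact set carrying most of that law `Φ ε z` is uniformly close to `Φ₀ z`, so
`|Φ ε z N| ≤ ε ^ δ` forces `|Φ₀ z N|` to be small, an event of vanishing probability. For
`|z| > R` and `ε ^ δ < Cb * R ^ p` the lower bound on `Φ ε` forces `‖N‖ > |z| ^ q`, so the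
probabilities are dominated by `1` on `[-R, R]` and by the Gaussian tail at `⌊|z|⌋ ^ q` beyond,
which is `ς`-integrable because `ς` grows only polynomially.
-/

open MeasureTheory Filter Set Real Asymptotics
open scoped Topology ENNReal

section SmallValues

variable {E : Type*} [MeasurableSpace E] {μ : Measure E} [IsFiniteMeasure μ] {f : E → ℝ}

lemma tendsto_measure_abs_le_nhdsGT_zero (hf : Measurable f) (hf0 : μ {y | f y = 0} = 0) :
    Tendsto (fun t : ℝ => μ {y | |f y| ≤ t}) (𝓝[>] 0) (𝓝 0) := by
  have hInter : (⋂ t > (0 : ℝ), {y | |f y| ≤ t}) = {y | f y = 0} := by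
    ext y
    simp only [mem_iInter, mem_ofPred_eq]
    refine ⟨fun h => abs_nonpos_iff.mp (le_of_forall_pos_le_add fun t ht => ?_),
      fun h t ht => by simp [h, ht.le]⟩
    simpa using h t ht
  have := tendsto_measure_biInter_gt (μ := μ) (s := fun t : ℝ => {y | |f y| ≤ t}) (a := 0)
    (fun t _ => (measurableSet_le hf.abs measurable_const).nullMeasurableSet)
    (fun s t _ hst y hy => le_trans hy hst) ⟨1, one_pos, measure_ne_top μ _⟩
  rwa [hInter, hf0] at this

variable [TopologicalSpace E] {ι : Type*} {l : Filter ι} {F : ι → E → ℝ} {a : ι → ℝ}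

lemma tendsto_measure_abs_le_of_tendstoLocallyUniformly_s18 (hμ : IsTightMeasureSet {μ})
    (hf : Measurable f) (hf0 : μ {y | f y = 0} = 0) (hF : TendstoLocallyUniformly F f l)
    (ha : Tendsto a l (𝓝 0)) : Tendsto (fun i => μ {y | |F i y| ≤ a i}) l (𝓝 0) := by
  rw [ENNReal.tendsto_nhds_zero]
  intro η hη
  have hη2 : 0 < η / 2 := ENNReal.half_pos hη.ne'
  obtain ⟨K, hK, hμK⟩ :=
    isTightMeasureSet_iff_exists_isCompact_measure_compl_le.mp hμ _ hη2
  obtain ⟨t, hμt, ht⟩ :=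
    ((tendsto_measure_abs_le_nhdsGT_zero hf hf0).eventually (eventually_le_nhds hη2)).and
      self_mem_nhdsWithin |>.exists
  have hunif := Metric.tendstoUniformlyOn_iff.mp
    ((tendstoLocallyUniformlyOn_iff_tendstoUniformlyOn_of_compact hK).mp
      hF.tendstoLocallyUniformlyOn) (t / 2) (half_pos ht)
  filter_upwards [hunif, ha.eventually_lt_const (half_pos ht)] with i hi hai
  have hsub : {y | |F i y| ≤ a i} ⊆ Kᶜ ∪ {y | |f y| ≤ t} := by
    intro y hy
    by_cases hyK : y ∈ K
    · have := hi y hyK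
      rw [Real.dist_eq] at this
      right
      simp only [mem_ofPred_eq] at hy ⊢
      linarith [abs_sub_abs_le_abs_sub (f y) (F i y)]
    · exact Or.inl hyK
  calc μ {y | |F i y| ≤ a i} ≤ μ Kᶜ + μ {y | |f y| ≤ t} :=
        (measure_mono hsub).trans (measure_union_le _ _)
    _ ≤ η / 2 + η / 2 := add_le_add (hμK μ rfl) hμt
    _ = η := ENNReal.add_halves η

end SmallValues

lemma summable_add_one_rpow_mul_exp_neg_mul_rpow {a b c : ℝ} (ha : 0 < a) (hb : 0 < b)
    (hc : 0 ≤ c) : Summable fun n : ℕ => ((n : ℝ) + 1) ^ c * exp (-a * (n : ℝ) ^ b) := by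
  have hexp : (fun x : ℝ => exp (-a * x ^ b)) =o[atTop] fun x => x ^ (-(c + 2)) := by
    refine ((isLittleO_exp_neg_mul_rpow_atTop ha (-(c + 2) / b)).comp_tendsto
      (tendsto_rpow_atTop hb)).congr' .rfl ?_
    filter_upwards [eventually_ge_atTop 0] with x hx
    simp only [Function.comp, ← rpow_mul hx]
    congr 1
    field_simp
  have hpow : (fun x : ℝ => (x + 1) ^ c) =O[atTop] fun x => x ^ c := by
    refine IsBigO.of_bound (2 ^ c) ?_
    filter_upwards [eventually_ge_atTop 1] with x hx
    rw [norm_of_nonneg (by positivity), norm_of_nonneg (by positivity), ← mul_rpow (by norm_num)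
      (by positivity)]
    exact rpow_le_rpow (by positivity) (by linarith) hc
  have hprod : (fun x : ℝ => (x + 1) ^ c * exp (-a * x ^ b)) =o[atTop] fun x => x ^ (-2 : ℝ) := by
    refine (hpow.mul_isLittleO hexp).congr' .rfl ?_
    filter_upwards [eventually_gt_atTop 0] with x hx
    rw [← rpow_add hx]
    ring_nf
  exact summable_of_isBigO_nat (summable_nat_rpow.mpr (by norm_num))
    (hprod.comp_tendsto tendsto_natCast_atTop_atTop).isBigO

lemma lintegral_comp_natFloor_abs_le (ς : Measure ℝ) (G : ℕ → ℝ≥0∞) :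
    ∫⁻ z, G ⌊|z|⌋₊ ∂ς ≤ ∑' n : ℕ, G n * ς (Iic ((n : ℝ) + 1)) := by
  have hφ : Measurable fun z : ℝ => ⌊|z|⌋₊ := measurable_abs.nat_floor
  rw [← lintegral_map (measurable_of_countable G) hφ, lintegral_countable']
  gcongr with n
  rw [Measure.map_apply hφ (measurableSet_singleton n)]
  refine measure_mono fun z (hz : ⌊|z|⌋₊ = n) => ?_
  exact (le_abs_self z).trans (hz ▸ Nat.lt_floor_add_one |z|).le

noncomputable def tailDominant (C₀ R q z : ℝ) : ℝ≥0∞ :=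
  (Icc (-R) R).indicator 1 z + ENNReal.ofReal (C₀ * exp (-(((⌊|z|⌋₊ : ℝ) ^ q) ^ 2) / C₀))

lemma summable_tailDominant_terms {C₀ q : ℝ} (hC₀ : 0 < C₀) (hq : 0 < q) :
    Summable fun n : ℕ =>
      C₀ * exp (-(((n : ℝ) ^ q) ^ 2) / C₀) * (C₀ * (1 + ((n : ℝ) + 1) ^ C₀)) := by
  refine ((summable_add_one_rpow_mul_exp_neg_mul_rpow (inv_pos.mpr hC₀) (by positivity : 0 < 2 * q)
    hC₀.le).mul_left (2 * C₀ ^ 2)).of_nonneg_of_le (fun n => by positivity) fun n => ?_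
  have hsq : ((n : ℝ) ^ q) ^ 2 = (n : ℝ) ^ (2 * q) := by
    rw [← rpow_natCast, ← rpow_mul (Nat.cast_nonneg n)]
    norm_num [mul_comm]
  have hone : 1 ≤ ((n : ℝ) + 1) ^ C₀ := one_le_rpow (by linarith [n.cast_nonneg (α := ℝ)]) hC₀.le
  rw [hsq, neg_div, div_eq_inv_mul, ← neg_mul]
  have := mul_le_mul_of_nonneg_left hone
    (by positivity : 0 ≤ C₀ ^ 2 * exp (-C₀⁻¹ * (n : ℝ) ^ (2 * q)))
  nlinarith

lemma lintegral_tailDominant_ne_top {ς : Measure ℝ} {C₀ R q : ℝ} (hC₀ : 0 < C₀) (hR : 0 ≤ R)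
    (hq : 0 < q) (hς : ∀ z : ℝ, 0 ≤ z → ς (Iic z) ≤ ENNReal.ofReal (C₀ * (1 + z ^ C₀))) :
    ∫⁻ z, tailDominant C₀ R q z ∂ς ≠ ∞ := by
  have hball : ∫⁻ z, (Icc (-R) R).indicator 1 z ∂ς < ∞ := by
    rw [lintegral_indicator_one measurableSet_Icc]
    exact (measure_mono Icc_subset_Iic_self).trans_lt ((hς R hR).trans_lt ENNReal.ofReal_lt_top)
  have htail : ∫⁻ z, ENNReal.ofReal (C₀ * exp (-(((⌊|z|⌋₊ : ℝ) ^ q) ^ 2) / C₀)) ∂ς < ∞ := by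
    refine (lintegral_comp_natFloor_abs_le ς
      fun n => ENNReal.ofReal (C₀ * exp (-(((n : ℝ) ^ q) ^ 2) / C₀))).trans_lt ?_
    calc _ ≤ ∑' n : ℕ, ENNReal.ofReal
            (C₀ * exp (-(((n : ℝ) ^ q) ^ 2) / C₀) * (C₀ * (1 + ((n : ℝ) + 1) ^ C₀))) := by
          gcongr with n
          rw [ENNReal.ofReal_mul (by positivity : 0 ≤ C₀ * exp (-(((n : ℝ) ^ q) ^ 2) / C₀))]
          exact mul_le_mul_right (hς _ (by positivity)) _
      _ < ∞ := by
          rw [← ENNReal.ofReal_tsum_of_nonneg (fun n => by positivity)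
            (summable_tailDominant_terms hC₀ hq)]
          exact ENNReal.ofReal_lt_top
  unfold tailDominant
  rw [lintegral_add_left (measurable_one.indicator measurableSet_Icc)]
  exact (ENNReal.add_lt_top.mpr ⟨hball, htail⟩).ne

lemma measure_abs_le_le_tailDominant {Ω E : Type*} [MeasurableSpace Ω] [NormedAddCommGroup E]
    {P : Measure Ω} [IsProbabilityMeasure P] {N : Ω → E} {C₀ Cb R p q t : ℝ}
    (hNtail : ∀ r : ℝ, 0 < r → P {ω | r < ‖N ω‖} ≤ ENNReal.ofReal (C₀ * exp (-(r ^ 2) / C₀)))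
    {F : ℝ → E → ℝ} (hC₀ : 0 ≤ C₀) (hCb : 0 ≤ Cb) (hR : 0 < R) (hp : 0 ≤ p) (hq : 0 ≤ q)
    (hlow : ∀ z y, R ≤ |z| → ‖y‖ ≤ |z| ^ q → Cb * |z| ^ p ≤ |F z y|) (ht : t < Cb * R ^ p)
    (z : ℝ) : P {ω | |F z (N ω)| ≤ t} ≤ tailDominant C₀ R q z := by
  by_cases hz : |z| ≤ R
  · calc P {ω | |F z (N ω)| ≤ t} ≤ 1 := prob_le_one
      _ = (Icc (-R) R).indicator 1 z := (indicator_of_mem (abs_le.mp hz) 1).symm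
      _ ≤ tailDominant C₀ R q z := le_self_add
  push Not at hz
  have hsub : {ω | |F z (N ω)| ≤ t} ⊆ {ω | |z| ^ q < ‖N ω‖} := fun ω hω => by
    by_contra hle
    have hRz : Cb * R ^ p ≤ Cb * |z| ^ p := by gcongr
    linarith [hlow z (N ω) hz.le (not_lt.mp hle), show |F z (N ω)| ≤ t from hω]
  calc P {ω | |F z (N ω)| ≤ t} ≤ P {ω | |z| ^ q < ‖N ω‖} := measure_mono hsub
    _ ≤ ENNReal.ofReal (C₀ * exp (-((|z| ^ q) ^ 2) / C₀)) :=
        hNtail _ (rpow_pos_of_pos (hR.trans hz) q)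
    _ ≤ ENNReal.ofReal (C₀ * exp (-(((⌊|z|⌋₊ : ℝ) ^ q) ^ 2) / C₀)) := by
        gcongr
        exact Nat.floor_le (abs_nonneg z)
    _ ≤ tailDominant C₀ R q z := le_add_self

lemma measurable_measure_prodMk_mem {α Ω E : Type*} [MeasurableSpace α] [MeasurableSpace Ω]
    [MeasurableSpace E] {P : Measure Ω} [SFinite P] {N : Ω → E} (hN : Measurable N)
    {S : Set (α × E)} (hS : MeasurableSet S) : Measurable fun z => P {ω | (z, N ω) ∈ S} := by
  have hmap : (fun z => P {ω | (z, N ω) ∈ S}) = fun z => P.map N (Prod.mk z ⁻¹' S) :=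
    funext fun z => (Measure.map_apply hN (measurable_prodMk_left hS)).symm
  exact hmap ▸ measurable_measure_prodMk_left hS

theorem stmt18 {Ω : Type*} [MeasurableSpace Ω] (P : Measure Ω) [IsProbabilityMeasure P]
    (m : ℕ) (C₀ : ℝ) (hC₀ : 0 < C₀)
    (N : Ω → (Fin m → ℝ)) (hN : Measurable N)
    (hNac : P.map N ≪ (volume : Measure (Fin m → ℝ)))
    (hNtail : ∀ r : ℝ, 0 < r →
      P {ω | r < ‖N ω‖} ≤ ENNReal.ofReal (C₀ * Real.exp (-(r ^ 2) / C₀)))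
    (ς : Measure ℝ)
    (hς : ∀ z : ℝ, 0 ≤ z → ς (Set.Iic z) ≤ ENNReal.ofReal (C₀ * (1 + z ^ C₀)))
    (Φ : ℝ → ℝ → (Fin m → ℝ) → ℝ) (Φ₀ : ℝ → (Fin m → ℝ) → ℝ)
    (hΦc : ∀ ε ∈ Set.Ioo (0:ℝ) 1, Continuous (fun q : ℝ × (Fin m → ℝ) => Φ ε q.1 q.2))
    (hΦ₀c : Continuous (fun q : ℝ × (Fin m → ℝ) => Φ₀ q.1 q.2))
    (hLU : TendstoLocallyUniformly (fun ε (q : ℝ × (Fin m → ℝ)) => Φ ε q.1 q.2)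
      (fun q => Φ₀ q.1 q.2) (nhdsWithin (0:ℝ) (Set.Ioi 0)))
    (hzero : ∀ z : ℝ, volume {y : Fin m → ℝ | Φ₀ z y = 0} = 0)
    (Cb R p q : ℝ) (hCb : 0 < Cb) (hR : 0 < R) (hp : 0 < p) (hq : 0 < q)
    (hlow : ∀ ε ∈ Set.Ioo (0:ℝ) 1, ∀ z : ℝ, ∀ y : Fin m → ℝ,
      R ≤ |z| → ‖y‖ ≤ |z| ^ q → Cb * |z| ^ p ≤ |Φ ε z y|) :
    ∀ δ : ℝ, 0 < δ →
      Tendsto (fun ε => ∫⁻ z, P {ω | |Φ ε z (N ω)| ≤ ε ^ δ} ∂ς)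
        (nhdsWithin (0:ℝ) (Set.Ioi 0)) (nhds 0) := by
  intro δ hδ
  have hεδ : Tendsto (fun ε : ℝ => ε ^ δ) (𝓝[>] 0) (𝓝 0) := by
    simpa [zero_rpow hδ.ne'] using
      (continuousAt_rpow_const 0 δ (Or.inr hδ.le)).tendsto.mono_left nhdsWithin_le_nhds
  have hIoo : Ioo (0 : ℝ) 1 ∈ 𝓝[>] 0 := Ioo_mem_nhdsGT one_pos
  have : IsProbabilityMeasure (P.map N) := Measure.isProbabilityMeasure_map hN.aemeasurable
  have hpointwise (z : ℝ) :
      Tendsto (fun ε => P {ω | |Φ ε z (N ω)| ≤ ε ^ δ}) (𝓝[>] 0) (𝓝 0) :=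
    tendsto_of_tendsto_of_tendsto_of_le_of_le tendsto_const_nhds
      (tendsto_measure_abs_le_of_tendstoLocallyUniformly_s18 isTightMeasureSet_singleton
        (hΦ₀c.comp (Continuous.prodMk_right z)).measurable (hNac (hzero z))
        (hLU.comp _ (Continuous.prodMk_right z)) hεδ)
      (fun _ => zero_le) fun _ => Measure.le_map_apply hN.aemeasurable _
  simpa using tendsto_lintegral_filter_of_dominated_convergence (tailDominant C₀ R q)
    (by
      filter_upwards [hIoo] with ε hε
      exact measurable_measure_prodMk_mem hN
        (isClosed_le (hΦc ε hε).abs continuous_const).measurableSet)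
    (by
      filter_upwards [hIoo, hεδ.eventually_lt_const (by positivity : 0 < Cb * R ^ p)]
        with ε hε hεR
      exact ae_of_all _ (measure_abs_le_le_tailDominant hNtail hC₀.le hCb.le hR hp.le hq.le
        (hlow ε hε) hεR))
    (lintegral_tailDominant_ne_top hC₀ hR.le hq hς) (ae_of_all _ hpointwise)
end
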